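/- arXiv:1505.07551 — 6 statements merged into one kernel-verified Lean document; each statement's English description precedes it below -/
import Mathlib

section
/- For all indices μ > -1 and all 0 < x < y, the ratio of modified Bessel functions of the first kind satisfies the upper bound I_μ(y)/I_μ(x) < (y/x)^(μ+2) · e^(y−x). -/
open Real

/-- Modified Bessel function of the first kind. -/
noncomputable def besselI (μ z : ℝ) : ℝ :=
  ∑' k : ℕ, (z / 2) ^ (μ + 2 * (k : ℝ)) / ((Nat.factorial k : ℝ) * Real.Gamma ((k : ℝ) + μ + 1))

/-!
Write `I_μ(z) = (z/2)^μ A(z²)` with `A(w) = ∑ aₖ wᵏ`, `aₖ = 1 / (4ᵏ k! Γ(k+μ+1))`, and compare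
`A` with `D(w) = ∑ dₖ wᵏ`, `dₖ = (k + 2(μ+1)) / (2k)!`, for which
`D(z²) = 2(μ+1) cosh z + (z/2) sinh z`. The ratio `aₖ / dₖ` is antitone for every `μ > -1`
(with `dₖ = 1 / (2k)!` this would need `μ ≥ -1/2`), so Chebyshev's sum inequality with weights
`dₖ xᵏ` gives `A(y²) / A(x²) ≤ D(y²) / D(x²)`. Finally `e^{-z} D(z²) / z²` is strictly
decreasing: `e^{-z} cosh z = (1 + e^{-2z}) / 2`, `e^{-z} sinh z = (1 - e^{-2z}) / 2`, and
`(1 - e^{-u}) / u` is a secant slope of the convex function `exp`.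
-/

open Finset

section Chebyshev

variable {ι : Type*} {p t s : ι → ℝ}

theorem Finset.sum_mul_mul_sum_le_of_antivary (F : Finset ι) (hp : ∀ i, 0 ≤ p i)
    (hts : Antivary t s) :
    (∑ i ∈ F, p i * (t i * s i)) * ∑ i ∈ F, p i ≤
      (∑ i ∈ F, p i * t i) * ∑ i ∈ F, p i * s i := by
  have hdouble : ∑ i ∈ F, ∑ j ∈ F, p i * p j * ((t j - t i) * (s j - s i)) ≤ 0 :=
    sum_nonpos fun i _ => sum_nonpos fun j _ =>
      mul_nonpos_of_nonneg_of_nonpos (mul_nonneg (hp i) (hp j)) (hts.sub_mul_sub_nonpos i j)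
  have hexpand : ∑ i ∈ F, ∑ j ∈ F, p i * p j * ((t j - t i) * (s j - s i)) =
      ∑ i ∈ F, ∑ j ∈ F, (p i * (p j * (t j * s j)) - p i * s i * (p j * t j) -
        p i * t i * (p j * s j) + p i * (t i * s i) * p j) :=
    sum_congr rfl fun i _ => sum_congr rfl fun j _ => by ring
  simp only [hexpand, sum_add_distrib, sum_sub_distrib, ← sum_mul_sum] at hdouble
  linarith

theorem tsum_mul_mul_tsum_le_of_antivary (hp : ∀ i, 0 ≤ p i) (hts : Antivary t s)
    (h1 : Summable fun i => p i * (t i * s i)) (h2 : Summable p)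
    (h3 : Summable fun i => p i * t i) (h4 : Summable fun i => p i * s i) :
    (∑' i, p i * (t i * s i)) * ∑' i, p i ≤ (∑' i, p i * t i) * ∑' i, p i * s i :=
  le_of_tendsto_of_tendsto' (Filter.Tendsto.mul h1.hasSum h2.hasSum)
    (Filter.Tendsto.mul h3.hasSum h4.hasSum)
    fun F : Finset ι => F.sum_mul_mul_sum_le_of_antivary hp hts

end Chebyshev

section PowerSeriesRatio

variable {a d : ℕ → ℝ}

theorem summable_mul_pow_of_antitone_div (ha : ∀ k, 0 ≤ a k) (hd : ∀ k, 0 < d k)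
    (had : Antitone fun k => a k / d k) {z : ℝ} (hz : 0 ≤ z)
    (hdz : Summable fun k => d k * z ^ k) : Summable fun k => a k * z ^ k := by
  refine (hdz.mul_left (a 0 / d 0)).of_nonneg_of_le (fun k => by have := ha k; positivity)
    fun k => ?_
  have hak : a k ≤ a 0 / d 0 * d k := by
    simpa [div_le_iff₀ (hd k)] using had (Nat.zero_le k)
  calc a k * z ^ k ≤ a 0 / d 0 * d k * z ^ k := by gcongr
    _ = a 0 / d 0 * (d k * z ^ k) := mul_assoc _ _ _

theorem tsum_mul_pow_mul_tsum_le_of_antitone_div (hd : ∀ k, 0 < d k)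
    (had : Antitone fun k => a k / d k) {x y : ℝ} (hx : 0 < x) (hxy : x ≤ y)
    (hax : Summable fun k => a k * x ^ k) (hay : Summable fun k => a k * y ^ k)
    (hdx : Summable fun k => d k * x ^ k) (hdy : Summable fun k => d k * y ^ k) :
    (∑' k, a k * y ^ k) * ∑' k, d k * x ^ k ≤
      (∑' k, a k * x ^ k) * ∑' k, d k * y ^ k := by
  have hmono : Monotone fun k : ℕ => (y / x) ^ k := pow_right_mono₀ ((one_le_div hx).2 hxy)
  have hats : (fun k => d k * x ^ k * (a k / d k * (y / x) ^ k)) = fun k => a k * y ^ k := by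
    ext k; field_simp [(hd k).ne']; rw [div_pow]; field_simp
  have hat : (fun k => d k * x ^ k * (a k / d k)) = fun k => a k * x ^ k := by
    ext k; field_simp [(hd k).ne']
  have hds : (fun k => d k * x ^ k * (y / x) ^ k) = fun k => d k * y ^ k := by
    ext k; rw [div_pow]; field_simp
  have := tsum_mul_mul_tsum_le_of_antivary (p := fun k => d k * x ^ k)
    (fun k => (mul_pos (hd k) (pow_pos hx k)).le) (had.antivary hmono)
    (hats ▸ hay) hdx (hat ▸ hax) (hds ▸ hdy)
  rwa [hats, hat, hds] at this

end PowerSeriesRatio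

theorem one_sub_exp_neg_div_antitoneOn :
    AntitoneOn (fun u => (1 - exp (-u)) / u) (Set.Ioi 0) := by
  intro x hx y hy hxy
  have := convexOn_exp.secant_mono (a := 0) (Set.mem_univ _) (Set.mem_univ (-y))
    (Set.mem_univ (-x)) (neg_ne_zero.2 hy.ne') (neg_ne_zero.2 hx.ne') (neg_le_neg hxy)
  simp only [exp_zero, sub_zero] at this
  rwa [← neg_div_neg_eq, neg_sub, neg_neg, ← neg_div_neg_eq (exp (-x) - 1), neg_sub,
    neg_neg] at this

theorem exp_neg_mul_cosh_sinh_div_sq (c : ℝ) {z : ℝ} (hz : z ≠ 0) :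
    exp (-z) * (c * cosh z + z / 2 * sinh z) / z ^ 2 =
      c / 2 * ((1 + exp (-(2 * z))) / z ^ 2) + (1 - exp (-(2 * z))) / (2 * z) / 2 := by
  have h1 : exp (-z) * exp z = 1 := by rw [← exp_add]; simp
  have h2 : exp (-z) * exp (-z) = exp (-(z * 2)) := by rw [← exp_add]; ring_nf
  rw [cosh_eq, sinh_eq]
  field_simp
  linear_combination (2 * c + z) * h1 + (2 * c - z) * h2

theorem cosh_sinh_div_lt {c x y : ℝ} (hc : 0 < c) (hx : 0 < x) (hxy : x < y) :
    (c * cosh y + y / 2 * sinh y) / (c * cosh x + x / 2 * sinh x) <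
      (y / x) ^ 2 * exp (y - x) := by
  have hy : 0 < y := hx.trans hxy
  have hCx : 0 < c * cosh x + x / 2 * sinh x := by have := sinh_pos_iff.2 hx; positivity
  have hG : exp (-y) * (c * cosh y + y / 2 * sinh y) / y ^ 2 <
      exp (-x) * (c * cosh x + x / 2 * sinh x) / x ^ 2 := by
    rw [exp_neg_mul_cosh_sinh_div_sq c hy.ne', exp_neg_mul_cosh_sinh_div_sq c hx.ne']
    have hcosh : (1 + exp (-(2 * y))) / y ^ 2 < (1 + exp (-(2 * x))) / x ^ 2 := by gcongr
    have hsinh : (1 - exp (-(2 * y))) / (2 * y) ≤ (1 - exp (-(2 * x))) / (2 * x) :=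
      one_sub_exp_neg_div_antitoneOn (by simpa using hx) (by simpa using hy) (by linarith)
    linarith [mul_lt_mul_of_pos_left hcosh (half_pos hc)]
  rw [div_lt_iff₀ hCx]
  rw [div_lt_div_iff₀ (by positivity) (by positivity), exp_neg, exp_neg] at hG
  rw [exp_sub, div_pow]
  field_simp at hG ⊢
  linarith

noncomputable def besselICoeff (μ : ℝ) (k : ℕ) : ℝ :=
  1 / (4 ^ k * (k.factorial : ℝ) * Gamma (k + μ + 1))

noncomputable def besselIComparisonCoeff (μ : ℝ) (k : ℕ) : ℝ :=
  (k + 2 * (μ + 1)) / ((2 * k).factorial : ℝ)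

theorem besselI_eq_rpow_mul_tsum (μ : ℝ) {z : ℝ} (hz : 0 < z) :
    besselI μ z = (z / 2) ^ μ * ∑' k, besselICoeff μ k * (z ^ 2) ^ k := by
  rw [besselI, ← tsum_mul_left]
  refine tsum_congr fun k => ?_
  rw [show μ + 2 * (k : ℝ) = μ + (2 * k : ℕ) by push_cast; ring,
    rpow_add_natCast (by positivity), besselICoeff, pow_mul, div_pow z, div_pow]
  norm_num
  ring

theorem hasSum_besselIComparisonCoeff_mul_pow (μ z : ℝ) :
    HasSum (fun k => besselIComparisonCoeff μ k * (z ^ 2) ^ k)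
      (2 * (μ + 1) * cosh z + z / 2 * sinh z) := by
  have hsinh : HasSum (fun k : ℕ => k * z ^ (2 * k) / (2 * k).factorial) (z / 2 * sinh z) := by
    have hshift : HasSum
        (fun k : ℕ => ((k + 1 : ℕ) : ℝ) * z ^ (2 * (k + 1)) / (2 * (k + 1)).factorial)
        (z / 2 * sinh z) := by
      refine ((hasSum_sinh z).mul_left (z / 2)).congr_fun fun k => ?_
      rw [show 2 * (k + 1) = 2 * k + 1 + 1 by ring, Nat.factorial_succ, pow_succ]
      push_cast
      field_simp
      ring
    simpa only [Nat.cast_zero, zero_mul, zero_div, zero_add] using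
      hshift.zero_add (f := fun k : ℕ => k * z ^ (2 * k) / (2 * k).factorial)
  refine (((hasSum_cosh z).mul_left (2 * (μ + 1))).add hsinh).congr_fun fun k => ?_
  rw [besselIComparisonCoeff, ← pow_mul]
  ring

section Coefficients

variable {μ : ℝ}

theorem besselICoeff_pos (hμ : -1 < μ) (k : ℕ) : 0 < besselICoeff μ k := by
  have := Gamma_pos_of_pos (show 0 < (k : ℝ) + μ + 1 by linarith [k.cast_nonneg (α := ℝ)])
  unfold besselICoeff
  positivity

theorem besselIComparisonCoeff_pos (hμ : -1 < μ) (k : ℕ) : 0 < besselIComparisonCoeff μ k := by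
  have : 0 < (k : ℝ) + 2 * (μ + 1) := by linarith [k.cast_nonneg (α := ℝ)]
  unfold besselIComparisonCoeff
  positivity

theorem besselICoeff_div_besselIComparisonCoeff_succ (hμ : -1 < μ) (k : ℕ) :
    besselICoeff μ (k + 1) / besselIComparisonCoeff μ (k + 1) =
      besselICoeff μ k / besselIComparisonCoeff μ k *
        ((k + 2 * (μ + 1)) * (2 * k + 1) / (2 * (k + μ + 1) * (k + 1 + 2 * (μ + 1)))) := by
  have hk : (0 : ℝ) ≤ k := k.cast_nonneg
  have hΓ : Gamma ((k + 1 : ℕ) + μ + 1) = (k + μ + 1) * Gamma (k + μ + 1) := by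
    rw [show ((k + 1 : ℕ) : ℝ) + μ + 1 = (k + μ + 1) + 1 by push_cast; ring]
    exact Gamma_add_one (by linarith)
  have := Gamma_pos_of_pos (show 0 < (k : ℝ) + μ + 1 by linarith)
  have : (0 : ℝ) < k + 2 * (μ + 1) := by linarith
  simp only [besselICoeff, besselIComparisonCoeff, hΓ, Nat.factorial_succ,
    show 2 * (k + 1) = 2 * k + 1 + 1 by ring]
  push_cast
  field_simp
  ring

theorem antitone_besselICoeff_div_besselIComparisonCoeff (hμ : -1 < μ) :
    Antitone fun k => besselICoeff μ k / besselIComparisonCoeff μ k := by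
  refine antitone_nat_of_succ_le fun k => ?_
  have hk : (0 : ℝ) ≤ k := k.cast_nonneg
  have hratio :
      (k + 2 * (μ + 1)) * (2 * k + 1) / (2 * (k + μ + 1) * (k + 1 + 2 * (μ + 1))) ≤ 1 := by
    rw [div_le_one (by nlinarith)]
    nlinarith
  rw [besselICoeff_div_besselIComparisonCoeff_succ hμ]
  exact mul_le_of_le_one_right
    (div_pos (besselICoeff_pos hμ k) (besselIComparisonCoeff_pos hμ k)).le hratio

end Coefficients

theorem besselI_ratio_upper (μ x y : ℝ) (hμ : -1 < μ) (hx : 0 < x) (hxy : x < y) :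
    besselI μ y / besselI μ x < (y / x) ^ (μ + 2) * Real.exp (y - x) := by
  have hy : 0 < y := hx.trans hxy
  have hd := besselIComparisonCoeff_pos hμ
  have had := antitone_besselICoeff_div_besselIComparisonCoeff hμ
  have hD := hasSum_besselIComparisonCoeff_mul_pow μ
  have hA (z : ℝ) : Summable fun k => besselICoeff μ k * (z ^ 2) ^ k :=
    summable_mul_pow_of_antitone_div (fun k => (besselICoeff_pos hμ k).le) hd had (sq_nonneg z)
      (hD z).summable
  have hAx : 0 < ∑' k, besselICoeff μ k * (x ^ 2) ^ k :=
    (hA x).tsum_pos (fun k => (mul_pos (besselICoeff_pos hμ k) (by positivity)).le) 0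
      (by simpa using besselICoeff_pos hμ 0)
  have hCx : 0 < 2 * (μ + 1) * cosh x + x / 2 * sinh x := by
    have := sinh_pos_iff.2 hx; have : 0 < μ + 1 := by linarith
    positivity
  have hcheb := tsum_mul_pow_mul_tsum_le_of_antitone_div hd had (by positivity)
    (pow_le_pow_left₀ hx.le hxy.le 2) (hA x) (hA y) (hD x).summable (hD y).summable
  rw [(hD x).tsum_eq, (hD y).tsum_eq] at hcheb
  calc besselI μ y / besselI μ x
      = (y / x) ^ μ *
          ((∑' k, besselICoeff μ k * (y ^ 2) ^ k) /
            ∑' k, besselICoeff μ k * (x ^ 2) ^ k) := by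
        rw [besselI_eq_rpow_mul_tsum μ hy, besselI_eq_rpow_mul_tsum μ hx, mul_div_mul_comm,
          ← div_rpow (by positivity) (by positivity)]
        field_simp
    _ ≤ (y / x) ^ μ * ((2 * (μ + 1) * cosh y + y / 2 * sinh y) /
          (2 * (μ + 1) * cosh x + x / 2 * sinh x)) := by
        gcongr (y / x) ^ μ * ?_
        rw [div_le_div_iff₀ hAx hCx]
        linarith
    _ < (y / x) ^ μ * ((y / x) ^ 2 * exp (y - x)) := by
        gcongr
        exact cosh_sinh_div_lt (by linarith) hx hxy
    _ = (y / x) ^ (μ + 2) * exp (y - x) := by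
        rw [rpow_add (by positivity), rpow_two, mul_assoc]
end

section
/- For all indices μ > -1/2 and all 0 < x < y, the ratio of modified Bessel functions satisfies the lower bound I_μ(y)/I_μ(x) > (x/y)^(μ+3) · e^(y−x). -/
/-!
With `w = z / 2` and `a k = 1 / (k! Γ(k + μ + 1))`, the function `(z/2)^(μ+3) I_μ(z)` is the series
`Φ(w) = ∑ a k w^(2k+2μ+3)`, and the claim is that `e^(-2w) Φ(w)` is strictly increasing, i.e.
`2 Φ < Φ'`. Writing `b k = a k w^(2k+2μ+2)`, so that `(k+1)(k+μ+1) b (k+1) = w² b k`, AM-GM gives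
`2 w b k ≤ (k+μ+1) b k + (k+1) b (k+1)`; summing and shifting the second sum yields
`2 w ∑ b k ≤ ∑ (2k+μ+1) b k < ∑ (2k+2μ+3) b k`.
-/

open Real

open Filter Set Nat

section Recurrence

variable {b : ℕ → ℝ} {C : ℝ}

theorem le_pow_div_factorial_of_succ_mul_le (hC : 0 ≤ C)
    (hb : ∀ k : ℕ, (k + 1) * b (k + 1) ≤ C * b k) (k : ℕ) : b k ≤ b 0 * C ^ k / k ! := by
  induction k with
  | zero => simp
  | succ k ih =>
    rw [factorial_succ, cast_mul, pow_succ, le_div_iff₀ (by positivity)]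
    calc b (k + 1) * ((k + 1 : ℕ) * k !) = (k + 1) * b (k + 1) * k ! := by push_cast; ring
      _ ≤ C * (b 0 * C ^ k / k !) * k ! :=
        mul_le_mul_of_nonneg_right ((hb k).trans (mul_le_mul_of_nonneg_left ih hC)) (by positivity)
      _ = b 0 * (C ^ k * C) := by field_simp

theorem summable_of_succ_mul_le (hC : 0 ≤ C) (h0 : ∀ k, 0 ≤ b k)
    (hb : ∀ k : ℕ, (k + 1) * b (k + 1) ≤ C * b k) : Summable b :=
  Summable.of_nonneg_of_le h0 (le_pow_div_factorial_of_succ_mul_le hC hb)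
    (by simpa only [mul_div_assoc] using (Real.summable_pow_div_factorial C).mul_left (b 0))

theorem summable_natCast_mul_of_succ_mul_le (hC : 0 ≤ C) (h0 : ∀ k, 0 ≤ b k)
    (hb : ∀ k : ℕ, (k + 1) * b (k + 1) ≤ C * b k) : Summable fun k : ℕ ↦ (k : ℝ) * b k := by
  refine (summable_nat_add_iff 1).mp ?_
  refine Summable.of_nonneg_of_le (fun k ↦ by positivity [h0 (k + 1)]) (fun k ↦ ?_)
    ((summable_of_succ_mul_le hC h0 hb).mul_left C)
  simpa using hb k

end Recurrence

section BesselRecurrence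

variable {b : ℕ → ℝ} {μ w : ℝ}

theorem succ_mul_le_of_bessel_recurrence (hμ : -1 < μ) (h0 : ∀ k, 0 ≤ b k)
    (hrec : ∀ k : ℕ, (k + 1) * (k + μ + 1) * b (k + 1) = w ^ 2 * b k) (k : ℕ) :
    (k + 1) * b (k + 1) ≤ w ^ 2 / (μ + 1) * b k := by
  have hμ1 : 0 < μ + 1 := by linarith
  rw [div_mul_eq_mul_div, ← hrec k, le_div_iff₀ hμ1]
  have : 0 ≤ (k + 1) * b (k + 1) := by positivity [h0 (k + 1)]
  nlinarith [mul_nonneg this k.cast_nonneg]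

theorem two_mul_mul_le_of_bessel_recurrence (hμ : -1 < μ) (h0 : ∀ k, 0 ≤ b k)
    (hrec : ∀ k : ℕ, (k + 1) * (k + μ + 1) * b (k + 1) = w ^ 2 * b k) (k : ℕ) :
    2 * w * b k ≤ (k + μ + 1) * b k + (k + 1) * b (k + 1) := by
  have hθ : (0 : ℝ) < k + μ + 1 := by linarith [k.cast_nonneg (α := ℝ)]
  have hsucc : (k + 1) * b (k + 1) = w ^ 2 * b k / (k + μ + 1) := by
    rw [← hrec k]; field_simp
  -- AM-GM: `θ b + w² b / θ - 2 w b = b (θ - w)² / θ` with `θ = k + μ + 1`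
  have hgap : (k + μ + 1) * b k + (k + 1) * b (k + 1) - 2 * w * b k =
      b k * (k + μ + 1 - w) ^ 2 / (k + μ + 1) := by
    rw [hsucc]; field_simp; ring
  have : 0 ≤ b k * (k + μ + 1 - w) ^ 2 / (k + μ + 1) := by positivity [h0 k]
  linarith

theorem summable_of_bessel_recurrence (hμ : -1 < μ) (h0 : ∀ k, 0 ≤ b k)
    (hrec : ∀ k : ℕ, (k + 1) * (k + μ + 1) * b (k + 1) = w ^ 2 * b k) : Summable b :=
  summable_of_succ_mul_le (div_nonneg (sq_nonneg w) (by linarith)) h0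
    (succ_mul_le_of_bessel_recurrence hμ h0 hrec)

theorem summable_affine_mul_of_bessel_recurrence (hμ : -1 < μ) (h0 : ∀ k, 0 ≤ b k)
    (hrec : ∀ k : ℕ, (k + 1) * (k + μ + 1) * b (k + 1) = w ^ 2 * b k) (c d : ℝ) :
    Summable fun k : ℕ ↦ (c * k + d) * b k := by
  have hs' := summable_natCast_mul_of_succ_mul_le (div_nonneg (sq_nonneg w) (by linarith)) h0
    (succ_mul_le_of_bessel_recurrence hμ h0 hrec)
  simpa only [add_mul, mul_assoc] using
    (hs'.mul_left c).add ((summable_of_bessel_recurrence hμ h0 hrec).mul_left d)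

theorem two_mul_tsum_lt_of_bessel_recurrence (hμ : -1 < μ) (h0 : ∀ k, 0 ≤ b k) (hb0 : 0 < b 0)
    (hrec : ∀ k : ℕ, (k + 1) * (k + μ + 1) * b (k + 1) = w ^ 2 * b k) :
    2 * w * ∑' k, b k < ∑' k : ℕ, (2 * k + 2 * μ + 3) * b k := by
  have hs := summable_of_bessel_recurrence hμ h0 hrec
  have haff := summable_affine_mul_of_bessel_recurrence hμ h0 hrec
  have hs' : Summable fun k : ℕ ↦ (k : ℝ) * b k := (haff 1 0).congr fun k ↦ by ring
  have hθs : Summable fun k : ℕ ↦ (k + μ + 1) * b k := (haff 1 (μ + 1)).congr fun k ↦ by ring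
  have hs'' : Summable fun k : ℕ ↦ ((k : ℝ) + 1) * b (k + 1) :=
    (summable_nat_add_iff 1).mpr hs' |>.congr fun k ↦ by push_cast; rfl
  have hshift : ∑' k : ℕ, ((k : ℝ) + 1) * b (k + 1) = ∑' k : ℕ, (k : ℝ) * b k := by
    rw [hs'.tsum_eq_zero_add]; simp
  calc 2 * w * ∑' k, b k = ∑' k, 2 * w * b k := tsum_mul_left.symm
    _ ≤ ∑' k : ℕ, ((k + μ + 1) * b k + (k + 1) * b (k + 1)) :=
        (hs.mul_left _).tsum_le_tsum (two_mul_mul_le_of_bessel_recurrence hμ h0 hrec)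
          (hθs.add hs'')
    _ = ∑' k : ℕ, (2 * k + μ + 1) * b k := by
        rw [hθs.tsum_add hs'', hshift, ← hθs.tsum_add hs']
        congr 1; ext k; ring
    _ < ∑' k : ℕ, (2 * k + 2 * μ + 3) * b k := by
        refine Summable.tsum_lt_tsum (i := 0) (fun k ↦ ?_) ?_
          ((haff 2 (μ + 1)).congr fun k ↦ by ring) ((haff 2 (2 * μ + 3)).congr fun k ↦ by ring)
        · exact mul_le_mul_of_nonneg_right (by linarith) (h0 k)
        · simp only [CharP.cast_eq_zero, mul_zero, zero_add]
          exact mul_lt_mul_of_pos_right (by linarith) hb0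

end BesselRecurrence

noncomputable def besselCoeff (μ : ℝ) (k : ℕ) : ℝ := ((k ! : ℝ) * Gamma (k + μ + 1))⁻¹

noncomputable def besselPowSeries (μ w : ℝ) : ℝ :=
  ∑' k : ℕ, besselCoeff μ k * w ^ (2 * k + 2 * μ + 3)

section Bessel

variable {μ w : ℝ}

theorem besselCoeff_pos (hμ : -1 < μ) (k : ℕ) : 0 < besselCoeff μ k := by
  have : 0 < Gamma (k + μ + 1) := Gamma_pos_of_pos (by linarith [k.cast_nonneg (α := ℝ)])
  unfold besselCoeff; positivity

theorem succ_mul_besselCoeff_succ (hμ : -1 < μ) (k : ℕ) :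
    (k + 1) * (k + μ + 1) * besselCoeff μ (k + 1) = besselCoeff μ k := by
  have hθ : (k : ℝ) + μ + 1 ≠ 0 := by linarith [k.cast_nonneg (α := ℝ)]
  have hΓ : Gamma ((k + 1 : ℕ) + μ + 1) = (k + μ + 1) * Gamma (k + μ + 1) := by
    rw [← Gamma_add_one hθ]; push_cast; ring_nf
  have : Gamma (k + μ + 1) ≠ 0 := (Gamma_pos_of_pos (by linarith [k.cast_nonneg (α := ℝ)])).ne'
  unfold besselCoeff
  rw [hΓ, factorial_succ]
  push_cast
  field_simp

theorem bessel_recurrence_besselCoeff_mul_rpow (hμ : -1 < μ) (hw : 0 < w) (k : ℕ) :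
    (k + 1) * (k + μ + 1) * (besselCoeff μ (k + 1) * w ^ (2 * ((k + 1 : ℕ) : ℝ) + 2 * μ + 2)) =
      w ^ 2 * (besselCoeff μ k * w ^ (2 * k + 2 * μ + 2)) := by
  rw [show 2 * ((k + 1 : ℕ) : ℝ) + 2 * μ + 2 = 2 * k + 2 * μ + 2 + 2 by push_cast; ring,
    rpow_add hw, rpow_two, ← succ_mul_besselCoeff_succ hμ k]
  ring

theorem besselPowSeries_eq_mul_tsum (hw : 0 < w) :
    besselPowSeries μ w = w * ∑' k : ℕ, besselCoeff μ k * w ^ (2 * k + 2 * μ + 2) := by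
  rw [besselPowSeries, ← tsum_mul_left]
  congr 1; ext k
  rw [show 2 * (k : ℝ) + 2 * μ + 3 = 2 * k + 2 * μ + 2 + 1 by ring, rpow_add_one hw.ne']
  ring

theorem rpow_mul_besselI {z : ℝ} (hz : 0 < z) :
    (z / 2) ^ (μ + 3) * besselI μ z = besselPowSeries μ (z / 2) := by
  rw [besselI, besselPowSeries, ← tsum_mul_left]
  congr 1; ext k
  rw [besselCoeff, show 2 * (k : ℝ) + 2 * μ + 3 = μ + 3 + (μ + 2 * k) by ring,
    rpow_add (half_pos hz) (μ + 3) (μ + 2 * k)]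
  ring

theorem besselPowSeries_pos (hμ : -1 < μ) (hw : 0 < w) : 0 < besselPowSeries μ w := by
  have h0 k : 0 < besselCoeff μ k * w ^ (2 * (k : ℝ) + 2 * μ + 2) :=
    mul_pos (besselCoeff_pos hμ k) (rpow_pos_of_pos hw _)
  rw [besselPowSeries_eq_mul_tsum hw]
  exact mul_pos hw <| (summable_of_bessel_recurrence hμ (fun k ↦ (h0 k).le)
    (bessel_recurrence_besselCoeff_mul_rpow hμ hw)).tsum_pos (fun k ↦ (h0 k).le) 0 (h0 0)

theorem hasDerivAt_besselPowSeries (hμ : -1 < μ) (hw : 0 < w) :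
    HasDerivAt (besselPowSeries μ)
      (∑' k : ℕ, (2 * k + 2 * μ + 3) * (besselCoeff μ k * w ^ (2 * k + 2 * μ + 2))) w := by
  have hR : 0 < w + 1 := by linarith
  have hb y (hy : 0 < y) k : 0 ≤ besselCoeff μ k * y ^ (2 * (k : ℝ) + 2 * μ + 2) :=
    mul_nonneg (besselCoeff_pos hμ k).le (rpow_nonneg hy.le _)
  have hexp (k : ℕ) : 0 ≤ 2 * (k : ℝ) + 2 * μ + 2 := by linarith [k.cast_nonneg (α := ℝ)]
  refine hasDerivAt_tsum_of_isPreconnected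
    (summable_affine_mul_of_bessel_recurrence hμ (hb _ hR)
      (bessel_recurrence_besselCoeff_mul_rpow hμ hR) 2 (2 * μ + 3))
    (g := fun k y ↦ besselCoeff μ k * y ^ (2 * (k : ℝ) + 2 * μ + 3))
    (g' := fun k y ↦ (2 * k + 2 * μ + 3) * (besselCoeff μ k * y ^ (2 * (k : ℝ) + 2 * μ + 2)))
    (t := Ioo 0 (w + 1)) isOpen_Ioo isPreconnected_Ioo (fun k y hy ↦ ?_) (fun k y hy ↦ ?_) (y₀ := w)
    ⟨hw, by linarith⟩ ?_ ⟨hw, by linarith⟩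
  · have := (hasDerivAt_rpow_const (p := 2 * k + 2 * μ + 3) (Or.inl hy.1.ne')).const_mul
      (besselCoeff μ k)
    rw [show 2 * (k : ℝ) + 2 * μ + 3 - 1 = 2 * k + 2 * μ + 2 by ring] at this
    exact this.congr_deriv (by ring)
  · have hθ : 0 ≤ 2 * (k : ℝ) + 2 * μ + 3 := by linarith [hexp k]
    rw [norm_of_nonneg (mul_nonneg hθ (hb y hy.1 k))]
    calc _ ≤ (2 * k + 2 * μ + 3) * (besselCoeff μ k * (w + 1) ^ (2 * (k : ℝ) + 2 * μ + 2)) := by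
          gcongr
          · exact (besselCoeff_pos hμ k).le
          · exact hy.1.le
          · exact hexp k
          · exact hy.2.le
      _ = _ := by ring
  · refine ((summable_of_bessel_recurrence hμ (hb w hw)
      (bessel_recurrence_besselCoeff_mul_rpow hμ hw)).mul_left w).congr fun k ↦ ?_
    rw [show 2 * (k : ℝ) + 2 * μ + 3 = 2 * k + 2 * μ + 2 + 1 by ring, rpow_add_one hw.ne']
    ring

theorem two_mul_besselPowSeries_lt (hμ : -1 < μ) (hw : 0 < w) :
    2 * besselPowSeries μ w <
      ∑' k : ℕ, (2 * k + 2 * μ + 3) * (besselCoeff μ k * w ^ (2 * k + 2 * μ + 2)) := by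
  rw [besselPowSeries_eq_mul_tsum hw, ← mul_assoc]
  exact two_mul_tsum_lt_of_bessel_recurrence hμ
    (fun k ↦ mul_nonneg (besselCoeff_pos hμ k).le (rpow_nonneg hw.le _))
    (mul_pos (besselCoeff_pos hμ 0) (rpow_pos_of_pos hw _))
    (bessel_recurrence_besselCoeff_mul_rpow hμ hw)

theorem strictMonoOn_exp_mul_besselPowSeries (hμ : -1 < μ) :
    StrictMonoOn (fun w ↦ exp (-2 * w) * besselPowSeries μ w) (Ioi 0) := by
  have hderiv : ∀ w ∈ Ioi (0 : ℝ), HasDerivAt (fun w ↦ exp (-2 * w) * besselPowSeries μ w)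
      (exp (-2 * w) * ((∑' k : ℕ, (2 * k + 2 * μ + 3) *
        (besselCoeff μ k * w ^ (2 * k + 2 * μ + 2))) - 2 * besselPowSeries μ w)) w := by
    intro w hw
    have hexp : HasDerivAt (fun w ↦ exp (-2 * w)) (exp (-2 * w) * -2) w :=
      ((hasDerivAt_id w).const_mul (-2)).exp.congr_deriv (by simp)
    exact (hexp.fun_mul (hasDerivAt_besselPowSeries hμ hw)).congr_deriv (by ring)
  refine strictMonoOn_of_deriv_pos (convex_Ioi 0)
    (fun w hw ↦ (hderiv w hw).continuousAt.continuousWithinAt) (fun w hw ↦ ?_)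
  rw [interior_Ioi] at hw
  rw [(hderiv w hw).deriv]
  exact mul_pos (exp_pos _) (sub_pos.mpr (two_mul_besselPowSeries_lt hμ hw))

theorem besselI_pos (hμ : -1 < μ) {z : ℝ} (hz : 0 < z) : 0 < besselI μ z :=
  pos_of_mul_pos_right ((rpow_mul_besselI hz).symm ▸ besselPowSeries_pos hμ (half_pos hz))
    (rpow_nonneg (half_pos hz).le _)

theorem strictMonoOn_exp_neg_mul_rpow_mul_besselI (hμ : -1 < μ) :
    StrictMonoOn (fun z ↦ exp (-z) * ((z / 2) ^ (μ + 3) * besselI μ z)) (Ioi 0) := by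
  intro x (hx : 0 < x) y (hy : 0 < y) hxy
  have := strictMonoOn_exp_mul_besselPowSeries hμ (half_pos hx) (half_pos hy) (by linarith)
  simp only [← rpow_mul_besselI hx, ← rpow_mul_besselI hy] at this
  convert this using 3 <;> ring

end Bessel

theorem besselI_ratio_lower_half (μ x y : ℝ) (hμ : -(1/2 : ℝ) < μ) (hx : 0 < x) (hxy : x < y) :
    (x / y) ^ (μ + 3) * Real.exp (y - x) < besselI μ y / besselI μ x := by
  have hμ' : -1 < μ := by linarith
  have hy : 0 < y := hx.trans hxy
  have hmono := strictMonoOn_exp_neg_mul_rpow_mul_besselI hμ' hx hy hxy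
  have hpow : (x / y) ^ (μ + 3) = (x / 2) ^ (μ + 3) / (y / 2) ^ (μ + 3) := by
    rw [← div_rpow (half_pos hx).le (half_pos hy).le]; congr 1; field_simp
  have hexp : exp (y - x) = exp (-x) / exp (-y) := by rw [← exp_sub]; ring_nf
  rw [lt_div_iff₀ (besselI_pos hμ' hx), hpow, hexp]
  calc _ = exp (-x) * ((x / 2) ^ (μ + 3) * besselI μ x) / ((y / 2) ^ (μ + 3) * exp (-y)) := by
        field_simp
    _ < exp (-y) * ((y / 2) ^ (μ + 3) * besselI μ y) / ((y / 2) ^ (μ + 3) * exp (-y)) := by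
        gcongr
    _ = besselI μ y := by field_simp
end

section
/- For every t > 0 and every x with 1/2 < x < 1, the two-sided series S₂ = Σ_{k=1}^∞ (2k/(1−x)) · (e^{−2k(k+1−x)/t} − e^{−2k(k−(1−x))/t}) satisfies 0 < −S₂ < (e^{−2x/t}/t) · Σ_{k=1}^∞ 8k² e^{−2k(k−1)/t}. Equivalently: Σ_{k=1}^∞ (2k/(1−x)) · (e^{−2k(k−(1−x))/t} − e^{−2k(k+1−x)/t}) is positive and bounded above by (e^{−2x/t}/t) · Σ_{k=1}^∞ 8k² e^{−2k(k−1)/t}. -/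
open Real

lemma S2_term_lt (t x : ℝ) (ht : 0 < t) (hx0 : 0 < x) (hx2 : x < 1) (k : ℕ) :
    (2 * ((k : ℝ) + 1) / (1 - x)) *
        (Real.exp (-(2 * ((k : ℝ) + 1) * (((k : ℝ) + 1) - (1 - x))) / t)
          - Real.exp (-(2 * ((k : ℝ) + 1) * (((k : ℝ) + 1) + 1 - x)) / t))
      < (Real.exp (-(2 * x) / t) / t) *
        (8 * ((k : ℝ) + 1) ^ 2 * Real.exp (-(2 * ((k : ℝ) + 1) * (k : ℝ)) / t)) := by
  set m : ℝ := (k : ℝ) + 1 with hm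
  have hm1 : (1 : ℝ) ≤ m := by
    have : (0:ℝ) ≤ (k:ℝ) := Nat.cast_nonneg k
    linarith
  have hmpos : 0 < m := by linarith
  have h1x : 0 < 1 - x := by linarith
  have ht' : t ≠ 0 := ht.ne'
  have h1x' : (1:ℝ) - x ≠ 0 := h1x.ne'
  set r : ℝ := 4 * m * (1 - x) / t with hr
  have hrpos : 0 < r := by positivity
  have hkm : (k : ℝ) = m - 1 := by rw [hm]; ring
  -- factor the difference of exponentials
  have hfac : Real.exp (-(2 * m * (m - (1 - x))) / t)
      - Real.exp (-(2 * m * (m + 1 - x)) / t)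
      = Real.exp (-(2 * m * (k : ℝ)) / t) * Real.exp (-(2 * m * x) / t)
        * (1 - Real.exp (-r)) := by
    have e1 : -(2 * m * (m - (1 - x))) / t
        = -(2 * m * (k : ℝ)) / t + -(2 * m * x) / t := by
      rw [hkm]; field_simp; ring
    have e2 : -(2 * m * (m + 1 - x)) / t
        = (-(2 * m * (k : ℝ)) / t + -(2 * m * x) / t) + -r := by
      rw [hkm, hr]; field_simp; ring
    rw [e1, e2]
    simp only [Real.exp_add]
    ring
  have h1er : 1 - Real.exp (-r) < r := by
    have := Real.add_one_lt_exp (x := -r) (by linarith)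
    linarith
  have hA : 0 < Real.exp (-(2 * m * (k : ℝ)) / t) := Real.exp_pos _
  have hB : 0 < Real.exp (-(2 * m * x) / t) := Real.exp_pos _
  have hc : 0 < 2 * m / (1 - x) * (Real.exp (-(2 * m * (k : ℝ)) / t)
      * Real.exp (-(2 * m * x) / t)) := by positivity
  have step1 : (2 * m / (1 - x)) *
      (Real.exp (-(2 * m * (m - (1 - x))) / t) - Real.exp (-(2 * m * (m + 1 - x)) / t))
      < (8 * m ^ 2 / t) * Real.exp (-(2 * m * (k : ℝ)) / t) * Real.exp (-(2 * m * x) / t) := by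
    rw [hfac]
    calc 2 * m / (1 - x) * (Real.exp (-(2 * m * (k : ℝ)) / t) * Real.exp (-(2 * m * x) / t)
            * (1 - Real.exp (-r)))
        = (2 * m / (1 - x) * (Real.exp (-(2 * m * (k : ℝ)) / t)
            * Real.exp (-(2 * m * x) / t))) * (1 - Real.exp (-r)) := by ring
      _ < (2 * m / (1 - x) * (Real.exp (-(2 * m * (k : ℝ)) / t)
            * Real.exp (-(2 * m * x) / t))) * r := by
          exact mul_lt_mul_of_pos_left h1er hc
      _ = (8 * m ^ 2 / t) * Real.exp (-(2 * m * (k : ℝ)) / t)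
            * Real.exp (-(2 * m * x) / t) := by
          rw [hr]; field_simp; ring
  have step2 : Real.exp (-(2 * m * x) / t) ≤ Real.exp (-(2 * x) / t) := by
    apply Real.exp_le_exp.mpr
    apply (div_le_div_iff_of_pos_right ht).mpr
    nlinarith
  calc (2 * m / (1 - x)) *
      (Real.exp (-(2 * m * (m - (1 - x))) / t) - Real.exp (-(2 * m * (m + 1 - x)) / t))
      < (8 * m ^ 2 / t) * Real.exp (-(2 * m * (k : ℝ)) / t) * Real.exp (-(2 * m * x) / t) :=
        step1
    _ ≤ (8 * m ^ 2 / t) * Real.exp (-(2 * m * (k : ℝ)) / t) * Real.exp (-(2 * x) / t) := by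
        have hpos : 0 < (8 * m ^ 2 / t) * Real.exp (-(2 * m * (k : ℝ)) / t) := by positivity
        exact mul_le_mul_of_nonneg_left step2 hpos.le
    _ = (Real.exp (-(2 * x) / t) / t) * (8 * m ^ 2 * Real.exp (-(2 * m * (k : ℝ)) / t)) := by
        ring

lemma S2_term_nonneg (t x : ℝ) (ht : 0 < t) (hx2 : x < 1) (k : ℕ) :
    0 ≤ (2 * ((k : ℝ) + 1) / (1 - x)) *
        (Real.exp (-(2 * ((k : ℝ) + 1) * (((k : ℝ) + 1) - (1 - x))) / t)
          - Real.exp (-(2 * ((k : ℝ) + 1) * (((k : ℝ) + 1) + 1 - x)) / t)) := by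
  have hm : (0:ℝ) < (k:ℝ) + 1 := by positivity
  have h1x : 0 < 1 - x := by linarith
  apply mul_nonneg (by positivity)
  have : Real.exp (-(2 * ((k : ℝ) + 1) * (((k : ℝ) + 1) + 1 - x)) / t)
      ≤ Real.exp (-(2 * ((k : ℝ) + 1) * (((k : ℝ) + 1) - (1 - x))) / t) := by
    apply Real.exp_le_exp.mpr
    apply (div_le_div_iff_of_pos_right ht).mpr
    nlinarith
  linarith

lemma S2_rhs_summable (t : ℝ) (ht : 0 < t) :
    Summable (fun k : ℕ => 8 * ((k : ℝ) + 1) ^ 2 * Real.exp (-(2 * ((k : ℝ) + 1) * (k : ℝ)) / t)) := by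
  set r : ℝ := Real.exp (-2 / t) with hrdef
  have hr0 : 0 < r := Real.exp_pos _
  have hr1 : r < 1 := Real.exp_lt_one_iff.mpr (div_neg_of_neg_of_pos (by norm_num) ht)
  have hgeom : Summable (fun k : ℕ => 8 * ((k : ℝ) + 1) ^ 2 * r ^ k) := by
    have hnorm : ‖r‖ < 1 := by rw [Real.norm_eq_abs, abs_of_pos hr0]; exact hr1
    have h2 : Summable (fun k : ℕ => (k : ℝ) ^ 2 * r ^ k) :=
      summable_pow_mul_geometric_of_norm_lt_one 2 hnorm
    have h1 : Summable (fun k : ℕ => (k : ℝ) ^ 1 * r ^ k) :=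
      summable_pow_mul_geometric_of_norm_lt_one 1 hnorm
    have h0 : Summable (fun k : ℕ => r ^ k) := summable_geometric_of_lt_one hr0.le hr1
    have := ((h2.add (h1.mul_left 2)).add h0).mul_left 8
    apply this.congr
    intro k
    simp only [pow_one]
    ring
  apply Summable.of_nonneg_of_le (fun k => by positivity) _ hgeom
  intro k
  have hk : (0:ℝ) ≤ (k:ℝ) := Nat.cast_nonneg k
  have hexp : Real.exp (-(2 * ((k : ℝ) + 1) * (k : ℝ)) / t) ≤ r ^ k := by
    rw [hrdef, ← Real.exp_nat_mul]
    apply Real.exp_le_exp.mpr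
    have heq : (k:ℝ) * (-2 / t) = (-(2 * (k:ℝ))) / t := by ring
    rw [heq]
    apply (div_le_div_iff_of_pos_right ht).mpr
    nlinarith
  have h8 : (0:ℝ) ≤ 8 * ((k : ℝ) + 1) ^ 2 := by positivity
  exact mul_le_mul_of_nonneg_left hexp h8

theorem series_S2_bound (t x : ℝ) (ht : 0 < t) (hx1 : 1/2 < x) (hx2 : x < 1) :
    0 < ∑' k : ℕ, (2 * ((k : ℝ) + 1) / (1 - x)) *
        (Real.exp (-(2 * ((k : ℝ) + 1) * (((k : ℝ) + 1) - (1 - x))) / t)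
          - Real.exp (-(2 * ((k : ℝ) + 1) * (((k : ℝ) + 1) + 1 - x)) / t)) ∧
    (∑' k : ℕ, (2 * ((k : ℝ) + 1) / (1 - x)) *
        (Real.exp (-(2 * ((k : ℝ) + 1) * (((k : ℝ) + 1) - (1 - x))) / t)
          - Real.exp (-(2 * ((k : ℝ) + 1) * (((k : ℝ) + 1) + 1 - x)) / t)))
      < (Real.exp (-(2 * x) / t) / t) *
        ∑' k : ℕ, 8 * ((k : ℝ) + 1) ^ 2 * Real.exp (-(2 * ((k : ℝ) + 1) * (k : ℝ)) / t) := by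
  have hx0 : 0 < x := by linarith
  have h1x : 0 < 1 - x := by linarith
  set f : ℕ → ℝ := fun k => (2 * ((k : ℝ) + 1) / (1 - x)) *
        (Real.exp (-(2 * ((k : ℝ) + 1) * (((k : ℝ) + 1) - (1 - x))) / t)
          - Real.exp (-(2 * ((k : ℝ) + 1) * (((k : ℝ) + 1) + 1 - x)) / t)) with hf
  set g : ℕ → ℝ := fun k => (Real.exp (-(2 * x) / t) / t) *
        (8 * ((k : ℝ) + 1) ^ 2 * Real.exp (-(2 * ((k : ℝ) + 1) * (k : ℝ)) / t)) with hg
  have hfg : ∀ k, f k < g k := fun k => S2_term_lt t x ht hx0 hx2 k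
  have hfnn : ∀ k, 0 ≤ f k := fun k => S2_term_nonneg t x ht hx2 k
  have hgsum : Summable g := (S2_rhs_summable t ht).mul_left _
  have hfsum : Summable f :=
    Summable.of_nonneg_of_le hfnn (fun k => (hfg k).le) hgsum
  constructor
  · apply Summable.tsum_pos hfsum hfnn 0
    show 0 < f 0
    simp only [hf]
    apply mul_pos
    · push_cast; positivity
    · rw [sub_pos]
      apply Real.exp_lt_exp.mpr
      apply (div_lt_div_iff_of_pos_right ht).mpr
      push_cast
      nlinarith
  · have hlt := Summable.tsum_lt_tsum (fun k => (hfg k).le) (hfg 0) hfsum hgsum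
    calc ∑' k, f k < ∑' k, g k := hlt
      _ = (Real.exp (-(2 * x) / t) / t) *
          ∑' k : ℕ, 8 * ((k : ℝ) + 1) ^ 2 * Real.exp (-(2 * ((k : ℝ) + 1) * (k : ℝ)) / t) :=
        tsum_mul_left
end

section
/- There exist constants c₁, c₂ > 0 depending only on μ > -1 such that for all z > 0: c₁ · z^μ e^z / (1+z)^{μ+1/2} ≤ I_μ(z) ≤ c₂ · z^μ e^z / (1+z)^{μ+1/2}. -/
/-!
The duplication formula rewrites the series as
`I_μ(z) = (z/2)^μ / √π · ∑ₖ z^(2k) / (2k)! · Γ(k + 1/2) / Γ(k + μ + 1)`, and Euler's limit formula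
gives `Γ(k + 1/2) / Γ(k + μ + 1) ≍ (2k + 1)^r` uniformly in `k`, where `r = -(μ + 1/2)`.
Neighbouring terms of the exponential series are comparable, so this even part is comparable to
the full sum `∑ₙ zⁿ / n! · (n + 1)^r = e^z 𝔼[(N + 1)^r]` with `N` Poisson of mean `z`.
Finally `𝔼[(N + 1)^r] ≍ (1 + z)^r`: Jensen's inequality (a tangent line at the mean `1 + z`) gives
the upper bound for `r ∈ [0, 1]` and the lower bound for `r ≥ 1`, while
`𝔼[(N + 1)^(r + 1)] = 𝔼[(N + 1)^r] + z 𝔼[(N + 2)^r]` shows that raising `r` by one multiplies the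
moment by a factor `≍ 1 + z`; this yields the lower bound on `[0, 1]` and propagates both bounds
to every real `r`. Bounds uniform in `z ∈ s` are stated as `=Θ[𝓟 s]`.
-/

open Real

open Filter Asymptotics Set
open scoped Nat

section Comparison

variable {α : Type*}

theorem isTheta_principal_iff {s : Set α} {f g : α → ℝ} (hf : ∀ x ∈ s, 0 ≤ f x)
    (hg : ∀ x ∈ s, 0 ≤ g x) :
    f =Θ[𝓟 s] g ↔ ∃ c > 0, ∃ C > 0, ∀ x ∈ s, c * g x ≤ f x ∧ f x ≤ C * g x := by
  simp only [IsTheta, isBigO_principal]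
  constructor
  · rintro ⟨⟨C, hC⟩, ⟨C', hC'⟩⟩
    refine ⟨(max C' 1)⁻¹, by positivity, max C 1, by positivity, fun x hx => ⟨?_, ?_⟩⟩
    · have h := hC' x hx
      rw [norm_of_nonneg (hf x hx), norm_of_nonneg (hg x hx)] at h
      rw [inv_mul_le_iff₀ (by positivity)]
      nlinarith [le_max_left C' 1, hf x hx]
    · have h := hC x hx
      rw [norm_of_nonneg (hf x hx), norm_of_nonneg (hg x hx)] at h
      nlinarith [le_max_left C 1, hg x hx]
  · rintro ⟨c, hc, C, -, h⟩
    refine ⟨⟨C, fun x hx => ?_⟩, ⟨c⁻¹, fun x hx => ?_⟩⟩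
    · rw [norm_of_nonneg (hf x hx), norm_of_nonneg (hg x hx)]
      exact (h x hx).2
    · rw [norm_of_nonneg (hf x hx), norm_of_nonneg (hg x hx), le_inv_mul_iff₀ hc]
      exact (h x hx).1

theorem isTheta_top_of_isTheta_atTop {f g : ℕ → ℝ} (hf : ∀ n, f n ≠ 0) (hg : ∀ n, g n ≠ 0)
    (h : f =Θ[atTop] g) : f =Θ[⊤] g :=
  ⟨isBigO_top.2 <| (isBigO_nat_atTop_iff fun n hn => absurd hn (hg n)).1 h.1,
    isBigO_top.2 <| (isBigO_nat_atTop_iff fun n hn => absurd hn (hf n)).1 h.2⟩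

variable {l : Filter α} {w : α → ℕ → ℝ} {a b : ℕ → ℝ}

theorem isTheta_mul_left_iff {u f g : α → ℝ} (hu : ∀ᶠ x in l, u x ≠ 0) :
    ((fun x => u x * f x) =Θ[l] fun x => u x * g x) ↔ f =Θ[l] g := by
  refine ⟨fun h => ?_, (isTheta_refl u l).mul⟩
  have hf : (fun x => u x * f x / u x) =ᶠ[l] f := hu.mono fun x hx => by simp [hx]
  have hg : (fun x => u x * g x / u x) =ᶠ[l] g := hu.mono fun x hx => by simp [hx]
  exact hf.symm.isTheta.trans ((h.div (isTheta_refl u l)).trans_eventuallyEq hg)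

theorem isBigO_tsum_mul (hw : ∀ x n, 0 ≤ w x n) (hb : ∀ n, 0 ≤ b n) (hab : a =O[⊤] b)
    (hsum : ∀ x, Summable fun n => w x n * b n) :
    (fun x => ∑' n, w x n * a n) =O[l] fun x => ∑' n, w x n * b n := by
  obtain ⟨C, hC⟩ := isBigO_top.1 hab
  refine (isBigO_top.2 ⟨C, fun x => ?_⟩).mono le_top
  have hterm : ∀ n, ‖w x n * a n‖ ≤ C * (w x n * b n) := fun n => by
    have := hC n
    rw [norm_of_nonneg (hb n)] at this
    rw [norm_mul, norm_of_nonneg (hw x n)]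
    nlinarith [hw x n]
  rw [norm_of_nonneg (tsum_nonneg fun n => mul_nonneg (hw x n) (hb n)), ← tsum_mul_left]
  exact tsum_of_norm_bounded ((hsum x).mul_left C).hasSum hterm

theorem isTheta_tsum_mul (hw : ∀ x n, 0 ≤ w x n) (ha : ∀ n, 0 ≤ a n) (hb : ∀ n, 0 ≤ b n)
    (hab : a =Θ[⊤] b) (hsum : ∀ x, Summable fun n => w x n * b n) :
    (fun x => ∑' n, w x n * a n) =Θ[l] fun x => ∑' n, w x n * b n :=
  ⟨isBigO_tsum_mul hw hb hab.1 hsum, isBigO_tsum_mul hw ha hab.2 fun x =>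
    summable_of_isBigO (hsum x) (((isBigO_refl (w x) _).mul hab.1).mono le_top)⟩

end Comparison

theorem rpow_le_rpow_abs_mul_rpow {x y c r : ℝ} (hx : 0 < x) (hy : 0 < y) (hxy : x ≤ c * y)
    (hyx : y ≤ c * x) : x ^ r ≤ c ^ |r| * y ^ r := by
  have hc : 0 < c := pos_of_mul_pos_left (hx.trans_le hxy) hy.le
  rcases le_or_gt 0 r with hr | hr
  · calc x ^ r ≤ (c * y) ^ r := rpow_le_rpow hx.le hxy hr
      _ = c ^ |r| * y ^ r := by rw [abs_of_nonneg hr, mul_rpow hc.le hy.le]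
  · calc x ^ r ≤ (y / c) ^ r :=
          rpow_le_rpow_of_nonpos (by positivity) (by rwa [div_le_iff₀ hc, mul_comm]) hr.le
      _ = c ^ |r| * y ^ r := by
          rw [abs_of_neg hr, div_rpow hy.le hc.le, rpow_neg hc.le]
          ring

theorem rpow_le_rpow_add_mul_sub {x y r : ℝ} (hx : 0 ≤ x) (hy : 0 < y) (hr₀ : 0 ≤ r)
    (hr₁ : r ≤ 1) : x ^ r ≤ y ^ r + r * y ^ (r - 1) * (x - y) := by
  have h := rpow_one_add_le_one_add_mul_self (s := x / y - 1)
    (by linarith [div_nonneg hx hy.le]) hr₀ hr₁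
  rw [add_sub_cancel, div_rpow hx hy.le, div_le_iff₀ (rpow_pos_of_pos hy r)] at h
  rw [rpow_sub_one hy.ne']
  refine h.trans_eq ?_
  field_simp

theorem rpow_add_mul_sub_le_rpow {x y r : ℝ} (hx : 0 ≤ x) (hy : 0 < y) (hr : 1 ≤ r) :
    y ^ r + r * y ^ (r - 1) * (x - y) ≤ x ^ r := by
  have h := one_add_mul_self_le_rpow_one_add (s := x / y - 1)
    (by linarith [div_nonneg hx hy.le]) hr
  rw [add_sub_cancel, div_rpow hx hy.le, le_div_iff₀ (rpow_pos_of_pos hy r)] at h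
  rw [rpow_sub_one hy.ne']
  refine le_of_eq_of_le ?_ h
  field_simp

theorem summable_pow_div_factorial_mul_rpow (r z : ℝ) {c : ℝ} (hc : 1 ≤ c) :
    Summable fun n : ℕ => z ^ n / n ! * ((n : ℝ) + c) ^ r := by
  refine .of_norm_bounded
    ((summable_pow_div_factorial (|z| * exp |r|)).mul_left (exp (|r| * (c - 1)))) fun n => ?_
  have hnc : 1 ≤ (n : ℝ) + c := by linarith [n.cast_nonneg (α := ℝ)]
  have hrpow : ((n : ℝ) + c) ^ r ≤ exp (|r| * (c - 1)) * exp |r| ^ n := by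
    rw [rpow_def_of_pos (by linarith), ← exp_nat_mul, ← exp_add]
    refine exp_le_exp.2 ?_
    have hlog := log_le_sub_one_of_pos (by linarith : 0 < (n : ℝ) + c)
    nlinarith [le_abs_self r, abs_nonneg r, log_nonneg hnc]
  rw [norm_mul, norm_div, norm_pow, norm_natCast, norm_of_nonneg (rpow_nonneg (by linarith) r),
    Real.norm_eq_abs]
  calc |z| ^ n / n ! * ((n : ℝ) + c) ^ r
      ≤ |z| ^ n / n ! * (exp (|r| * (c - 1)) * exp |r| ^ n) := by gcongr
    _ = _ := by rw [mul_pow]; ring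

theorem pow_succ_div_factorial_succ_le {z c : ℝ} {n : ℕ} (hz : 0 ≤ z) (h : z ≤ c * (n + 1)) :
    z ^ (n + 1) / (n + 1)! ≤ c * (z ^ n / n !) := by
  calc z ^ (n + 1) / (n + 1)! = z ^ n / n ! * (z / (n + 1)) := by
        rw [pow_succ, Nat.factorial_succ]
        push_cast
        field_simp
    _ ≤ z ^ n / n ! * c :=
        mul_le_mul_of_nonneg_left ((div_le_iff₀ (by positivity)).2 h) (by positivity)
    _ = c * (z ^ n / n !) := mul_comm _ _

theorem pow_div_factorial_le_pow_succ_div_factorial_succ {z : ℝ} {n : ℕ} (h : n + 1 ≤ z) :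
    z ^ n / n ! ≤ z ^ (n + 1) / (n + 1)! := by
  have hz : 0 < z := by linarith [n.cast_nonneg (α := ℝ)]
  calc z ^ n / n ! = z ^ n / n ! * 1 := (mul_one _).symm
    _ ≤ z ^ n / n ! * (z / (n + 1)) :=
        mul_le_mul_of_nonneg_left ((one_le_div (by positivity)).2 h) (by positivity)
    _ = z ^ (n + 1) / (n + 1)! := by
        rw [pow_succ, Nat.factorial_succ]
        push_cast
        field_simp

noncomputable def poissonTerm (r z : ℝ) (n : ℕ) : ℝ := z ^ n / n ! * ((n : ℝ) + 1) ^ r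

/-- `exp z` times the moment `𝔼[(N + 1) ^ r]` of a Poisson variable `N` with mean `z`. -/
noncomputable def poissonMoment (r z : ℝ) : ℝ := ∑' n, poissonTerm r z n

section Poisson

variable {r z : ℝ}

theorem summable_poissonTerm (r z : ℝ) : Summable (poissonTerm r z) :=
  summable_pow_div_factorial_mul_rpow r z le_rfl

theorem poissonTerm_nonneg (hz : 0 ≤ z) (n : ℕ) : 0 ≤ poissonTerm r z n := by
  unfold poissonTerm; positivity

theorem poissonMoment_nonneg (hz : 0 ≤ z) : 0 ≤ poissonMoment r z :=
  tsum_nonneg (poissonTerm_nonneg hz)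

theorem poissonMoment_add_one (r z : ℝ) :
    poissonMoment (r + 1) z =
      poissonMoment r z + z * ∑' n : ℕ, z ^ n / n ! * ((n : ℝ) + 2) ^ r := by
  have hsplit : ∀ n : ℕ,
      poissonTerm (r + 1) z n = poissonTerm r z n + n * (z ^ n / n ! * ((n : ℝ) + 1) ^ r) := by
    intro n
    rw [poissonTerm, poissonTerm, rpow_add_one (by positivity)]
    ring
  have hshift : HasSum (fun n : ℕ => n * (z ^ n / n ! * ((n : ℝ) + 1) ^ r))
      (z * ∑' n : ℕ, z ^ n / n ! * ((n : ℝ) + 2) ^ r) := by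
    rw [← hasSum_nat_add_iff' 1, Finset.sum_range_one, Nat.cast_zero, zero_mul, sub_zero]
    refine ((summable_pow_div_factorial_mul_rpow r z one_le_two).hasSum.mul_left z).congr_fun
      fun n => ?_
    rw [Nat.factorial_succ, Nat.cast_succ, add_assoc, one_add_one_eq_two]
    push_cast
    field_simp
    ring
  rw [poissonMoment, poissonMoment, tsum_congr hsplit,
    ((summable_poissonTerm r z).hasSum.add hshift).tsum_eq]

theorem hasSum_pow_div_factorial (z : ℝ) : HasSum (fun n : ℕ => z ^ n / n !) (exp z) := by
  simpa [exp_eq_exp_ℝ] using NormedSpace.expSeries_div_hasSum_exp z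

theorem poissonMoment_zero (z : ℝ) : poissonMoment 0 z = exp z := by
  simpa [poissonMoment, poissonTerm] using (hasSum_pow_div_factorial z).tsum_eq

theorem poissonMoment_one (z : ℝ) : poissonMoment 1 z = (1 + z) * exp z := by
  have h := poissonMoment_add_one 0 z
  simp only [zero_add, rpow_zero, mul_one] at h
  rw [h, poissonMoment_zero, (hasSum_pow_div_factorial z).tsum_eq]
  ring

theorem hasSum_pow_div_factorial_mul_tangent (r z : ℝ) :
    HasSum (fun n : ℕ => z ^ n / n ! * ((1 + z) ^ r + r * (1 + z) ^ (r - 1) * ((n + 1) - (1 + z))))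
      (exp z * (1 + z) ^ r) := by
  have h₀ := hasSum_pow_div_factorial z
  have h₁ : HasSum (poissonTerm 1 z) (poissonMoment 1 z) := (summable_poissonTerm 1 z).hasSum
  rw [poissonMoment_one] at h₁
  have h := (h₀.mul_left ((1 + z) ^ r)).add ((h₁.sub (h₀.mul_left (1 + z))).mul_left
    (r * (1 + z) ^ (r - 1)))
  rw [sub_self, mul_zero, add_zero] at h
  rw [mul_comm (exp z)]
  exact h.congr_fun fun n => by simp only [poissonTerm, rpow_one]; ring

theorem poissonMoment_le_of_le_one (hz : 0 ≤ z) (hr₀ : 0 ≤ r) (hr₁ : r ≤ 1) :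
    poissonMoment r z ≤ exp z * (1 + z) ^ r :=
  hasSum_le (fun n => mul_le_mul_of_nonneg_left
      (rpow_le_rpow_add_mul_sub (by positivity) (by linarith) hr₀ hr₁) (by positivity))
    (summable_poissonTerm r z).hasSum (hasSum_pow_div_factorial_mul_tangent r z)

theorem le_poissonMoment_of_one_le (hz : 0 ≤ z) (hr : 1 ≤ r) :
    exp z * (1 + z) ^ r ≤ poissonMoment r z :=
  hasSum_le (fun n => mul_le_mul_of_nonneg_left
      (rpow_add_mul_sub_le_rpow (by positivity) (by linarith) hr) (by positivity))
    (hasSum_pow_div_factorial_mul_tangent r z) (summable_poissonTerm r z).hasSum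

theorem tsum_mul_add_two_rpow_le (hz : 0 ≤ z) :
    ∑' n : ℕ, z ^ n / n ! * ((n : ℝ) + 2) ^ r ≤ 2 ^ |r| * poissonMoment r z := by
  rw [poissonMoment, ← tsum_mul_left]
  refine Summable.tsum_le_tsum (fun n => ?_) (summable_pow_div_factorial_mul_rpow r z one_le_two)
    ((summable_poissonTerm r z).mul_left _)
  rw [poissonTerm, mul_left_comm]
  exact mul_le_mul_of_nonneg_left
    (rpow_le_rpow_abs_mul_rpow (by positivity) (by positivity) (by linarith) (by linarith))
    (by positivity)

theorem poissonMoment_le_tsum_mul_add_two_rpow (hz : 0 ≤ z) :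
    poissonMoment r z ≤ 2 ^ |r| * ∑' n : ℕ, z ^ n / n ! * ((n : ℝ) + 2) ^ r := by
  rw [poissonMoment, ← tsum_mul_left]
  refine Summable.tsum_le_tsum (fun n => ?_) (summable_poissonTerm r z)
    ((summable_pow_div_factorial_mul_rpow r z one_le_two).mul_left _)
  rw [poissonTerm, mul_left_comm]
  exact mul_le_mul_of_nonneg_left
    (rpow_le_rpow_abs_mul_rpow (by positivity) (by positivity) (by linarith) (by linarith))
    (by positivity)

theorem poissonMoment_add_one_le (hz : 0 ≤ z) :
    poissonMoment (r + 1) z ≤ 2 ^ |r| * ((1 + z) * poissonMoment r z) := by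
  have h2 : (1 : ℝ) ≤ 2 ^ |r| := one_le_rpow one_le_two (abs_nonneg r)
  have hT := poissonMoment_nonneg (r := r) hz
  rw [poissonMoment_add_one]
  nlinarith [mul_le_mul_of_nonneg_left (tsum_mul_add_two_rpow_le (r := r) hz) hz]

theorem le_poissonMoment_add_one (hz : 0 ≤ z) :
    (1 + z) * poissonMoment r z ≤ 2 ^ |r| * poissonMoment (r + 1) z := by
  have h2 : (1 : ℝ) ≤ 2 ^ |r| := one_le_rpow one_le_two (abs_nonneg r)
  have hT := poissonMoment_nonneg (r := r) hz
  rw [poissonMoment_add_one]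
  nlinarith [mul_le_mul_of_nonneg_left (poissonMoment_le_tsum_mul_add_two_rpow (r := r) hz) hz]

theorem poissonMoment_add_one_isTheta (r : ℝ) :
    poissonMoment (r + 1) =Θ[𝓟 (Ici 0)] fun z => (1 + z) * poissonMoment r z := by
  refine (isTheta_principal_iff (fun z hz => poissonMoment_nonneg hz)
    (fun z hz => mul_nonneg (by linarith [mem_Ici.1 hz]) (poissonMoment_nonneg hz))).2
    ⟨(2 ^ |r|)⁻¹, by positivity, 2 ^ |r|, by positivity,
      fun z hz => ⟨?_, poissonMoment_add_one_le hz⟩⟩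
  rw [inv_mul_le_iff₀ (by positivity)]
  exact le_poissonMoment_add_one hz

theorem poissonMoment_isTheta_of_mem_Icc (hr : r ∈ Icc 0 1) :
    poissonMoment r =Θ[𝓟 (Ici 0)] fun z => exp z * (1 + z) ^ r := by
  refine (isTheta_principal_iff (fun z hz => poissonMoment_nonneg hz) (fun z hz => by
    have : 0 ≤ z := hz; positivity)).2
    ⟨(2 ^ |r|)⁻¹, by positivity, 1, one_pos, fun z hz => ⟨?_, ?_⟩⟩
  · have hz' : 0 < 1 + z := by linarith [mem_Ici.1 hz]
    rw [inv_mul_le_iff₀ (by positivity)]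
    refine le_of_mul_le_mul_left ?_ hz'
    calc (1 + z) * (exp z * (1 + z) ^ r) = exp z * (1 + z) ^ (r + 1) := by
          rw [rpow_add_one hz'.ne']; ring
      _ ≤ poissonMoment (r + 1) z := le_poissonMoment_of_one_le hz (by linarith [hr.1])
      _ ≤ 2 ^ |r| * ((1 + z) * poissonMoment r z) := poissonMoment_add_one_le hz
      _ = (1 + z) * (2 ^ |r| * poissonMoment r z) := by ring
  · rw [one_mul]
    exact poissonMoment_le_of_le_one hz hr.1 hr.2

theorem poissonMoment_isTheta_add_one_iff :
    (poissonMoment (r + 1) =Θ[𝓟 (Ici 0)] fun z => exp z * (1 + z) ^ (r + 1)) ↔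
      poissonMoment r =Θ[𝓟 (Ici 0)] fun z => exp z * (1 + z) ^ r := by
  have hpos : ∀ᶠ z in 𝓟 (Ici (0 : ℝ)), 1 + z ≠ 0 :=
    eventually_principal.2 fun z hz => by linarith [mem_Ici.1 hz]
  have hrhs : (fun z => exp z * (1 + z) ^ (r + 1)) =ᶠ[𝓟 (Ici 0)]
      fun z => (1 + z) * (exp z * (1 + z) ^ r) :=
    hpos.mono fun z hz => by dsimp only; rw [rpow_add_one hz]; ring
  rw [(poissonMoment_add_one_isTheta r).isTheta_congr_left, hrhs.isTheta.isTheta_congr_right,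
    isTheta_mul_left_iff hpos]

theorem poissonMoment_isTheta (r : ℝ) :
    poissonMoment r =Θ[𝓟 (Ici 0)] fun z => exp z * (1 + z) ^ r := by
  have key : ∀ m : ℤ, poissonMoment (Int.fract r + m) =Θ[𝓟 (Ici 0)]
      fun z => exp z * (1 + z) ^ (Int.fract r + m) := by
    intro m
    induction m using Int.induction_on with
    | zero =>
      simpa using poissonMoment_isTheta_of_mem_Icc ⟨Int.fract_nonneg r, (Int.fract_lt_one r).le⟩
    | succ i ih =>
      push_cast
      rw [← add_assoc]
      exact poissonMoment_isTheta_add_one_iff.2 ih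
    | pred i ih =>
      refine poissonMoment_isTheta_add_one_iff.1 ?_
      push_cast at ih ⊢
      rwa [show Int.fract r + (-(i : ℝ) - 1) + 1 = Int.fract r + -i by ring]
  simpa only [Int.fract_add_floor] using key ⌊r⌋

theorem poissonTerm_two_mul_add_one_le (hz : 0 ≤ z) (k : ℕ) :
    poissonTerm r z (2 * k + 1) ≤
      2 ^ |r| * (2 * poissonTerm r z (2 * k) + poissonTerm r z (2 * k + 2)) := by
  have h2 : (0 : ℝ) ≤ 2 ^ |r| := by positivity
  have hT₀ := poissonTerm_nonneg (r := r) hz (2 * k)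
  have hT₂ := poissonTerm_nonneg (r := r) hz (2 * k + 2)
  simp only [poissonTerm] at hT₀ hT₂ ⊢
  push_cast at hT₀ hT₂ ⊢
  rcases le_total z (2 * k + 2) with hzk | hzk
  · have hw := pow_succ_div_factorial_succ_le (n := 2 * k) (c := 2) hz (by push_cast; linarith)
    have hp : ((2 * k : ℝ) + 1 + 1) ^ r ≤ 2 ^ |r| * ((2 * k : ℝ) + 1) ^ r :=
      rpow_le_rpow_abs_mul_rpow (by positivity) (by positivity) (by linarith) (by linarith)
    calc z ^ (2 * k + 1) / (2 * k + 1)! * ((2 * k : ℝ) + 1 + 1) ^ r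
        ≤ 2 * (z ^ (2 * k) / (2 * k)!) * (2 ^ |r| * ((2 * k : ℝ) + 1) ^ r) :=
          mul_le_mul hw hp (by positivity) (by positivity)
      _ ≤ _ := by nlinarith
  · have hw := pow_div_factorial_le_pow_succ_div_factorial_succ (n := 2 * k + 1) (z := z)
      (by push_cast; linarith)
    have hp : ((2 * k : ℝ) + 1 + 1) ^ r ≤ 2 ^ |r| * ((2 * k : ℝ) + 2 + 1) ^ r :=
      rpow_le_rpow_abs_mul_rpow (by positivity) (by positivity) (by linarith) (by linarith)
    calc z ^ (2 * k + 1) / (2 * k + 1)! * ((2 * k : ℝ) + 1 + 1) ^ r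
        ≤ z ^ (2 * k + 2) / (2 * k + 2)! * (2 ^ |r| * ((2 * k : ℝ) + 2 + 1) ^ r) :=
          mul_le_mul hw hp (by positivity) (by positivity)
      _ ≤ _ := by nlinarith

theorem tsum_poissonTerm_two_mul_isTheta (r : ℝ) :
    (fun z => ∑' k : ℕ, poissonTerm r z (2 * k)) =Θ[𝓟 (Ici 0)] poissonMoment r := by
  refine (isTheta_principal_iff (fun z hz => tsum_nonneg fun k => poissonTerm_nonneg hz _)
    (fun z hz => poissonMoment_nonneg hz)).2
    ⟨(1 + 3 * 2 ^ |r|)⁻¹, by positivity, 1, one_pos, fun z hz => ?_⟩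
  have hs := summable_poissonTerm r z
  have hE : Summable fun k => poissonTerm r z (2 * k) :=
    hs.comp_injective (mul_right_injective₀ two_ne_zero)
  have hO : Summable fun k => poissonTerm r z (2 * k + 1) :=
    hs.comp_injective fun a b h => by simpa using h
  have hE₂ : ∑' k, poissonTerm r z (2 * k + 2) ≤ ∑' k, poissonTerm r z (2 * k) :=
    tsum_comp_le_tsum_of_inj hE (fun k => poissonTerm_nonneg hz _) (add_left_injective 1)
  have hodd : ∑' k, poissonTerm r z (2 * k + 1) ≤
      2 ^ |r| * (2 * ∑' k, poissonTerm r z (2 * k) + ∑' k, poissonTerm r z (2 * k + 2)) := by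
    have hE₂' : Summable fun k => poissonTerm r z (2 * k + 2) :=
      hs.comp_injective fun a b h => by simpa using h
    calc ∑' k, poissonTerm r z (2 * k + 1)
        ≤ ∑' k, 2 ^ |r| * (2 * poissonTerm r z (2 * k) + poissonTerm r z (2 * k + 2)) :=
          hO.tsum_le_tsum (poissonTerm_two_mul_add_one_le hz)
            (((hE.mul_left 2).add hE₂').mul_left _)
      _ = _ := by rw [tsum_mul_left, (hE.mul_left 2).tsum_add hE₂', tsum_mul_left]
  have hO₀ : 0 ≤ ∑' k, poissonTerm r z (2 * k + 1) := tsum_nonneg fun k => poissonTerm_nonneg hz _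
  have h2 : (0 : ℝ) ≤ 2 ^ |r| := by positivity
  rw [poissonMoment, ← tsum_even_add_odd hE hO, inv_mul_le_iff₀ (by positivity)]
  constructor <;> nlinarith

end Poisson

theorem Gamma_nat_add_add_one_eq_mul_prod {s : ℝ} (hs : 0 < s) (n : ℕ) :
    Gamma (n + s + 1) = Gamma s * ∏ j ∈ Finset.range (n + 1), (s + j) := by
  induction n with
  | zero => simp [Gamma_add_one hs.ne', mul_comm]
  | succ n ih =>
    rw [Finset.prod_range_succ, ← mul_assoc, ← ih, Nat.cast_succ, add_right_comm _ 1,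
      Gamma_add_one (by positivity)]
    ring

theorem Gamma_nat_add_add_one_isEquivalent {s : ℝ} (hs : 0 < s) :
    (fun n : ℕ => Gamma (n + s + 1)) ~[atTop] fun n => n ! * (n : ℝ) ^ s := by
  refine (isEquivalent_of_tendsto_one ?_).symm
  have h := (GammaSeq_tendsto_Gamma s).div_const (Gamma s)
  rw [div_self (Gamma_pos_of_pos hs).ne'] at h
  refine h.congr fun n => ?_
  rw [GammaSeq, Pi.div_apply, Gamma_nat_add_add_one_eq_mul_prod hs]
  ring

theorem Gamma_nat_add_one_isTheta {a : ℝ} (ha : -1 < a) :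
    (fun n : ℕ => Gamma (n + a + 1)) =Θ[⊤] fun n => n ! * ((n : ℝ) + 1) ^ a := by
  have hs : 0 < a + 1 := by linarith
  have hn : ∀ x : ℝ, (fun n : ℕ => (n : ℝ)) ~[atTop] fun n => (n : ℝ) + x := fun x =>
    isEquivalent_of_tendsto_one (tendsto_natCast_div_add_atTop x)
  have h₁ : (fun n : ℕ => Gamma (n + (a + 1) + 1)) =Θ[atTop]
      fun n => n ! * ((n : ℝ) + 1) ^ (a + 1) :=
    (Gamma_nat_add_add_one_isEquivalent hs).isTheta.trans
      ((isTheta_refl _ _).mul ((hn 1).rpow (fun n => by positivity)).isTheta)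
  have h₂ := h₁.div ((hn (a + 1)).symm.trans (hn 1)).isTheta
  refine isTheta_top_of_isTheta_atTop
    (fun n => (Gamma_pos_of_pos (by linarith [n.cast_nonneg (α := ℝ)])).ne')
    (fun n => by positivity) ?_
  have e₁ : (fun n : ℕ => Gamma (n + a + 1)) =
      fun n : ℕ => Gamma (n + (a + 1) + 1) / (n + (a + 1)) :=
    funext fun n => by
      have hpos : (0 : ℝ) < n + (a + 1) := by positivity
      rw [Gamma_add_one hpos.ne', mul_div_cancel_left₀ _ hpos.ne', add_assoc]
  have e₂ : (fun n : ℕ => n ! * ((n : ℝ) + 1) ^ a) =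
      fun n : ℕ => n ! * ((n : ℝ) + 1) ^ (a + 1) / (n + 1) :=
    funext fun n => by
      rw [rpow_add_one (by positivity)]
      field_simp
  rw [e₁, e₂]
  exact h₂

theorem Gamma_nat_add_half_div_isTheta {μ : ℝ} (hμ : -1 < μ) :
    (fun k : ℕ => Gamma (k + 1 / 2) / Gamma (k + μ + 1)) =Θ[⊤]
      fun k => (((2 * k : ℕ) : ℝ) + 1) ^ (-(μ + 1 / 2)) := by
  have h := (Gamma_nat_add_one_isTheta (a := -1 / 2) (by norm_num)).div
    (Gamma_nat_add_one_isTheta hμ)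
  have hlin : (fun k : ℕ => (k : ℝ) + 1) =Θ[⊤] fun k => ((2 * k : ℕ) : ℝ) + 1 := by
    refine ⟨isBigO_top.2 ⟨1, fun k => ?_⟩, isBigO_top.2 ⟨2, fun k => ?_⟩⟩ <;>
      rw [norm_of_nonneg (by positivity), norm_of_nonneg (by positivity)] <;> push_cast <;>
      linarith [k.cast_nonneg (α := ℝ)]
  have e₁ : (fun k : ℕ => Gamma (k + -1 / 2 + 1) / Gamma (k + μ + 1)) =
      fun k : ℕ => Gamma (k + 1 / 2) / Gamma (k + μ + 1) :=
    funext fun k => by norm_num [add_assoc]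
  have e₂ : (fun k : ℕ => k ! * ((k : ℝ) + 1) ^ (-1 / 2 : ℝ) / (k ! * ((k : ℝ) + 1) ^ μ)) =
      fun k : ℕ => ((k : ℝ) + 1) ^ (-(μ + 1 / 2)) :=
    funext fun k => by
      rw [mul_div_mul_left _ _ (by positivity), ← rpow_sub (by positivity)]
      ring_nf
  rw [e₁, e₂] at h
  exact h.trans (hlin.rpow (Eventually.of_forall fun k => by positivity)
    (Eventually.of_forall fun k => by positivity))

theorem factorial_mul_Gamma_nat_add_half (k : ℕ) :
    (k ! : ℝ) * Gamma (k + 1 / 2) = (2 * k)! * √π / 4 ^ k := by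
  have h := Gamma_mul_Gamma_add_half ((k : ℝ) + 1 / 2)
  rw [show (k : ℝ) + 1 / 2 + 1 / 2 = k + 1 by ring, Gamma_nat_eq_factorial,
    show 2 * ((k : ℝ) + 1 / 2) = ((2 * k : ℕ) : ℝ) + 1 by push_cast; ring, Gamma_nat_eq_factorial,
    show (1 : ℝ) - (((2 * k : ℕ) : ℝ) + 1) = -((2 * k : ℕ) : ℝ) by ring, rpow_neg two_pos.le,
    rpow_natCast, pow_mul] at h
  rw [mul_comm, h]
  norm_num
  field_simp

noncomputable def besselSeries (μ z : ℝ) : ℝ :=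
  ∑' k : ℕ, z ^ (2 * k) / (2 * k)! * (Gamma (k + 1 / 2) / Gamma (k + μ + 1))

theorem besselI_eq_mul_besselSeries (μ : ℝ) {z : ℝ} (hz : 0 < z) :
    besselI μ z = (z / 2) ^ μ / √π * besselSeries μ z := by
  rw [besselI, besselSeries, ← tsum_mul_left]
  refine tsum_congr fun k => ?_
  have hpow : (z / 2) ^ (μ + 2 * (k : ℝ)) = (z / 2) ^ μ * (z ^ (2 * k) / 4 ^ k) := by
    rw [rpow_add (by positivity), show 2 * (k : ℝ) = ((2 * k : ℕ) : ℝ) by push_cast; ring,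
      rpow_natCast, div_pow, pow_mul, pow_mul]
    norm_num
  have hfac : ((2 * k)! : ℝ) = 4 ^ k * (k ! * Gamma (k + 1 / 2)) / √π := by
    rw [factorial_mul_Gamma_nat_add_half]
    field_simp
  rw [hpow, hfac]
  field_simp

section BesselSeries

variable {μ : ℝ}

theorem Gamma_nat_add_half_div_nonneg (hμ : -1 < μ) (k : ℕ) :
    0 ≤ Gamma (k + 1 / 2) / Gamma (k + μ + 1) :=
  div_nonneg (Gamma_pos_of_pos (by positivity)).le
    (Gamma_pos_of_pos (by linarith [k.cast_nonneg (α := ℝ)])).le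

theorem besselSeries_nonneg (hμ : -1 < μ) (z : ℝ) : 0 ≤ besselSeries μ z :=
  tsum_nonneg fun k => mul_nonneg (div_nonneg (Even.pow_nonneg (even_two_mul k) z) (by positivity))
    (Gamma_nat_add_half_div_nonneg hμ k)

theorem besselSeries_isTheta (hμ : -1 < μ) :
    besselSeries μ =Θ[𝓟 (Ici 0)] fun z => exp z * (1 + z) ^ (-(μ + 1 / 2)) :=
  (isTheta_tsum_mul
    (fun z k => div_nonneg (Even.pow_nonneg (even_two_mul k) z) (by positivity))
    (Gamma_nat_add_half_div_nonneg hμ) (fun k => by positivity) (Gamma_nat_add_half_div_isTheta hμ)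
    fun z => (summable_poissonTerm _ z).comp_injective (mul_right_injective₀ two_ne_zero)).trans
  ((tsum_poissonTerm_two_mul_isTheta _).trans (poissonMoment_isTheta _))

end BesselSeries

theorem besselI_two_sided (μ : ℝ) (hμ : -1 < μ) :
    ∃ c₁ > (0 : ℝ), ∃ c₂ > (0 : ℝ), ∀ z > (0 : ℝ),
      c₁ * (z ^ μ * Real.exp z / (1 + z) ^ (μ + 1/2)) ≤ besselI μ z ∧
      besselI μ z ≤ c₂ * (z ^ μ * Real.exp z / (1 + z) ^ (μ + 1/2)) := by
  have hΘ : (fun z => (z / 2) ^ μ / √π * besselSeries μ z) =Θ[𝓟 (Ioi 0)]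
      fun z => z ^ μ * exp z / (1 + z) ^ (μ + 1 / 2) := by
    refine (((isTheta_refl _ _).mul ((besselSeries_isTheta hμ).mono
      (principal_mono.2 Ioi_subset_Ici_self))).trans_eventuallyEq ?_).trans
      ((isTheta_const_mul_left (c := (2 ^ μ * √π)⁻¹) (by positivity)).2 (isTheta_refl _ _))
    refine eventually_principal.2 fun z (hz : 0 < z) => ?_
    dsimp only
    rw [div_rpow hz.le two_pos.le, rpow_neg (by positivity)]
    field_simp
  obtain ⟨c, hc, C, hC, h⟩ := (isTheta_principal_iff
    (fun z (hz : 0 < z) => mul_nonneg (by positivity) (besselSeries_nonneg hμ z))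
    (fun z (hz : 0 < z) => by positivity)).1 hΘ
  refine ⟨c, hc, C, hC, fun z hz => ?_⟩
  rw [besselI_eq_mul_besselSeries μ hz]
  exact h z hz
end

section
/- For every t > 0 and x ∈ (1/2,1), the series S₁ = Σ_{k=−∞}^{∞} exp(−2k(k+1−x)/t) (which converges absolutely) satisfies |S₁ − 1| ≤ C e^{−2x/t} for a constant C independent of t ∈ (0,1) and x ∈ (1/2,1). -/
open Real

lemma b_summable : Summable (fun k : ℤ => Real.exp 2 * Real.exp (-2) ^ k.natAbs) := by
  have hr0 : (0:ℝ) ≤ Real.exp (-2) := (Real.exp_pos _).le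
  have hr1 : Real.exp (-2) < 1 := Real.exp_lt_one_iff.mpr (by norm_num)
  have hgeo : Summable (fun n : ℕ => Real.exp 2 * Real.exp (-2) ^ n) :=
    (summable_geometric_of_lt_one hr0 hr1).mul_left _
  apply Summable.of_nat_of_neg
  · simpa using hgeo
  · simpa using hgeo

theorem series_S1_bound :
    ∃ C : ℝ, ∀ t x : ℝ, 0 < t → t < 1 → 1/2 < x → x < 1 →
      |(∑' k : ℤ, Real.exp (-(2 * (k : ℝ) * ((k : ℝ) + 1 - x)) / t)) - 1|
        ≤ C * Real.exp (-(2 * x) / t) := by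
  refine ⟨∑' k : ℤ, Real.exp 2 * Real.exp (-2) ^ k.natAbs, fun t x ht ht1 hx hx1 => ?_⟩
  set f : ℤ → ℝ := fun k => Real.exp (-(2 * (k : ℝ) * ((k : ℝ) + 1 - x)) / t) with hf_def
  set b : ℤ → ℝ := fun k => Real.exp 2 * Real.exp (-2) ^ k.natAbs with hb_def
  have hb_nonneg : ∀ k, 0 ≤ b k := fun k =>
    mul_nonneg (Real.exp_pos _).le (pow_nonneg (Real.exp_pos _).le _)
  have hE : Real.exp (-(2 * x) / t) ≤ 1 := by
    apply Real.exp_le_one_iff.mpr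
    apply div_nonpos_of_nonpos_of_nonneg <;> nlinarith
  -- key pointwise bound
  have key : ∀ k : ℤ, k ≠ 0 → f k ≤ Real.exp (-(2 * x) / t) * b k := by
    intro k hk
    have hbk : b k = Real.exp (2 - 2 * (k.natAbs : ℝ)) := by
      show Real.exp 2 * Real.exp (-2) ^ k.natAbs = _
      rw [← Real.exp_nat_mul, ← Real.exp_add]
      ring_nf
    rw [hbk, ← Real.exp_add]
    apply Real.exp_le_exp.mpr
    have hn : (k.natAbs : ℝ) = |(k : ℝ)| := by
      simp [Nat.cast_natAbs, Int.cast_abs]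
    have hn1 : (1:ℝ) ≤ (k.natAbs : ℝ) := by
      have : 1 ≤ k.natAbs := Int.natAbs_pos.mpr hk
      exact_mod_cast this
    -- d := 2k(k+1-x) - 2x ≥ 2 natAbs k - 2 ≥ 0
    have hd : 2 * (k.natAbs : ℝ) - 2 ≤ 2 * (k : ℝ) * ((k : ℝ) + 1 - x) - 2 * x := by
      rcases le_or_gt 0 (k : ℝ) with h | h
      · rw [hn, abs_of_nonneg h]
        have hk1 : (1:ℝ) ≤ (k : ℝ) := by rw [hn, abs_of_nonneg h] at hn1; linarith
        nlinarith
      · rw [hn, abs_of_neg h]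
        have hk1 : (k : ℝ) ≤ -1 := by
          rw [hn, abs_of_neg h] at hn1; linarith
        nlinarith
    have hd0 : (0:ℝ) ≤ 2 * (k : ℝ) * ((k : ℝ) + 1 - x) - 2 * x := by linarith
    -- divide by t
    have hdiv : (2 * (k : ℝ) * ((k : ℝ) + 1 - x) - 2 * x)
        ≤ (2 * (k : ℝ) * ((k : ℝ) + 1 - x) - 2 * x) / t := by
      rw [le_div_iff₀ ht]; nlinarith
    have : -(2 * (k : ℝ) * ((k : ℝ) + 1 - x)) / t
        = -(2 * x) / t - (2 * (k : ℝ) * ((k : ℝ) + 1 - x) - 2 * x) / t := by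
      field_simp; ring
    rw [this]
    linarith
  have hfb : ∀ k : ℤ, f k ≤ b k := by
    intro k
    rcases eq_or_ne k 0 with rfl | hk
    · have : f 0 = 1 := by simp [hf_def]
      rw [this, hb_def]
      simpa using Real.one_le_exp (by norm_num : (0:ℝ) ≤ 2)
    · calc f k ≤ Real.exp (-(2 * x) / t) * b k := key k hk
        _ ≤ 1 * b k := by
            exact mul_le_mul_of_nonneg_right hE (hb_nonneg k)
        _ = b k := one_mul _
  have hf_nonneg : ∀ k, 0 ≤ f k := fun k => (Real.exp_pos _).le
  have hf_sum : Summable f := Summable.of_nonneg_of_le hf_nonneg hfb b_summable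
  have hsplit := Summable.tsum_eq_add_tsum_ite hf_sum 0
  have hf0 : f 0 = 1 := by simp [hf_def]
  rw [hsplit, hf0, add_sub_cancel_left]
  -- now bound the tail
  set g : ℤ → ℝ := fun k => Real.exp (-(2 * x) / t) * b k with hg_def
  have hg_sum : Summable g := b_summable.mul_left _
  have hbound : ∀ k : ℤ, |if k = 0 then 0 else f k| ≤ g k := by
    intro k
    rcases eq_or_ne k 0 with rfl | hk
    · have h0 : |(if (0:ℤ) = 0 then (0:ℝ) else f 0)| = 0 := by simp
      rw [h0]
      exact mul_nonneg (Real.exp_pos _).le (hb_nonneg 0)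
    · rw [if_neg hk, abs_of_nonneg (hf_nonneg k)]
      exact key k hk
  have habs_sum : Summable (fun k : ℤ => |if k = 0 then 0 else f k|) :=
    Summable.of_nonneg_of_le (fun k => abs_nonneg _) hbound hg_sum
  have h1 : |∑' k : ℤ, if k = 0 then 0 else f k|
      ≤ ∑' k : ℤ, |if k = 0 then 0 else f k| := by
    have := norm_tsum_le_tsum_norm (f := fun k : ℤ => if k = 0 then 0 else f k)
      (by simpa only [Real.norm_eq_abs] using habs_sum)
    simpa only [Real.norm_eq_abs] using this
  calc |∑' k : ℤ, if k = 0 then 0 else f k|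
      ≤ ∑' k : ℤ, |if k = 0 then 0 else f k| := h1
    _ ≤ ∑' k : ℤ, g k := Summable.tsum_le_tsum hbound habs_sum hg_sum
    _ = Real.exp (-(2 * x) / t) * ∑' k : ℤ, b k := tsum_mul_left
    _ = (∑' k : ℤ, b k) * Real.exp (-(2 * x) / t) := mul_comm _ _
end

section
/- For the one-dimensional heat-type series q(t,x) = Σ_{k=−∞}^{∞} ((1−x)+2k)/(√(2π) t^{3/2}) · exp(−((1−x)+2k)²/(2t)), there is t₀ > 0 and a constant C such that for all t ∈ (0,t₀) and x ∈ (1/2,1): |q(t,x) · (√(2π) t^{3/2}/(1−x)) · e^{(1−x)²/(2t)} − 1| ≤ C e^{−x/t}. -/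
open Real

lemma aux_nat (r : ℝ) (h0 : 0 ≤ r) (h1 : r < 1) :
    Summable (fun n : ℕ => (1 + 2*(n:ℝ)) * r^n) := by
  have hg : Summable (fun n : ℕ => r ^ n) := summable_geometric_of_lt_one h0 h1
  have hp : Summable (fun n : ℕ => (n:ℝ) ^ 1 * r ^ n) :=
    summable_pow_mul_geometric_of_norm_lt_one 1 (by rwa [Real.norm_eq_abs, abs_of_nonneg h0])
  refine (hg.add (hp.mul_left 2)).congr (fun n => ?_)
  ring

lemma exp_int_summable (c : ℝ) (hc : 0 < c) :
    Summable (fun k : ℤ => (1 + 2*|(k:ℝ)|) * Real.exp (-(c * |(k:ℝ)|))) := by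
  have h0 : 0 ≤ Real.exp (-c) := (Real.exp_pos _).le
  have h1 : Real.exp (-c) < 1 := Real.exp_lt_one_iff.2 (by linarith)
  apply Summable.of_nat_of_neg
  · refine (aux_nat _ h0 h1).congr (fun n => ?_)
    rw [← Real.exp_nat_mul]
    simp [abs_of_nonneg (by positivity : (0:ℝ) ≤ (n:ℝ))]
    ring_nf
    exact Or.inl trivial
  · refine (aux_nat _ h0 h1).congr (fun n => ?_)
    rw [← Real.exp_nat_mul]
    simp [abs_of_nonpos (by simp : ((-(n:ℤ)):ℝ) ≤ 0)]
    ring_nf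
    exact Or.inl trivial


set_option maxHeartbeats 1600000 in
lemma pair_bound (t a k : ℝ) (ht : 0 < t) (ht1 : t ≤ 1) (ha : 0 < a) (ha2 : a ≤ 1/2)
    (hk : 1 ≤ k) :
    |(a + 2*k)/a * Real.exp ((a^2 - (a + 2*k)^2)/(2*t)) +
      (a + 2*(-k))/a * Real.exp ((a^2 - (a + 2*(-k))^2)/(2*t))|
      ≤ 130 * Real.exp (-(1-a)/t) * Real.exp (-(k/16)) := by
  set P := Real.exp ((a^2 - (a + 2*k)^2)/(2*t)) with hPdef
  set Q := Real.exp ((a^2 - (2*k - a)^2)/(2*t)) with hQdef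
  clear_value P Q
  have e2 : Real.exp ((a^2 - (a + 2*(-k))^2)/(2*t)) = Q := by
    rw [hQdef]; congr 1; ring
  have hPpos : 0 < P := hPdef ▸ Real.exp_pos _
  have hQpos : 0 < Q := hQdef ▸ Real.exp_pos _
  have hPQ : P ≤ Q := by
    rw [hPdef, hQdef]
    apply Real.exp_le_exp.2
    apply div_le_div_of_nonneg_right ?_ (by positivity)
    nlinarith
  have hPQratio : Q - P ≤ Q * ((8*a*k)/(2*t)) := by
    have hP : P = Q * Real.exp (-((8*a*k)/(2*t))) := by
      rw [hQdef, hPdef, ← Real.exp_add]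
      congr 1
      field_simp
      ring
    have h1 := Real.add_one_le_exp (-((8*a*k)/(2*t)))
    nlinarith
  rw [e2]
  have hrw : (a + 2*k)/a * P + (a + 2*(-k))/a * Q = ((2*k + a)*P - (2*k - a)*Q)/a := by
    field_simp
    ring
  rw [hrw, abs_div, abs_of_pos ha, div_le_iff₀ ha]
  have hDbound : |(2*k + a)*P - (2*k - a)*Q| ≤ a * Q * (2 + 8*k^2/t) := by
    rw [abs_le]
    constructor
    · have h1 : (2*k - a) * (Q - P) ≤ (2*k) * (Q * ((8*a*k)/(2*t))) := by
        apply mul_le_mul (by linarith) hPQratio (by nlinarith) (by linarith)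
      have h2 : (2*k) * (Q * ((8*a*k)/(2*t))) = a * Q * (8*k^2/t) := by
        field_simp
      nlinarith
    · have h1 : (2*k + a)*P ≤ (2*k + a)*Q :=
        mul_le_mul_of_nonneg_left hPQ (by linarith)
      have h3 : (0:ℝ) ≤ a * Q * (8*k^2/t) := by positivity
      nlinarith
  have hQsplit : Q ≤ Real.exp (-(1-a)/t) * Real.exp (-(k^2/(16*t))) * Real.exp (-(k^2/(16*t))) := by
    rw [hQdef, ← Real.exp_add, ← Real.exp_add]
    apply Real.exp_le_exp.2
    have key : (1-a) + k^2/8 ≤ 2*k^2 - 2*k*a := by nlinarith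
    have eL : (a^2 - (2*k-a)^2)/(2*t) = (-(2*k^2 - 2*k*a))/t := by field_simp; ring
    have eR : -(1-a)/t + -(k^2/(16*t)) + -(k^2/(16*t)) = (-((1-a) + k^2/8))/t := by
      field_simp; ring
    rw [eL, eR, div_le_div_iff₀ ht ht]
    nlinarith
  have hbound1 : Real.exp (-(k^2/(16*t))) ≤ Real.exp (-(k/16)) := by
    apply Real.exp_le_exp.2
    have h : k/16 ≤ k^2/(16*t) := by
      rw [div_le_div_iff₀ (by norm_num) (by positivity)]
      nlinarith
    linarith
  have hbound2 : (2 + 8*k^2/t) * Real.exp (-(k^2/(16*t))) ≤ 130 := by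
    have hy : (0:ℝ) < k^2/(16*t) := by positivity
    have h1 : k^2/(16*t) ≤ Real.exp (k^2/(16*t)) := by
      nlinarith [Real.add_one_le_exp (k^2/(16*t))]
    have he : Real.exp (-(k^2/(16*t))) * (k^2/(16*t)) ≤ 1 := by
      rw [Real.exp_neg, inv_mul_le_iff₀ (Real.exp_pos _)]
      linarith
    have he1 : Real.exp (-(k^2/(16*t))) ≤ 1 := by
      rw [← Real.exp_zero]
      exact Real.exp_le_exp.2 (by linarith)
    have heq : (2 + 8*k^2/t) * Real.exp (-(k^2/(16*t)))
        = 2 * Real.exp (-(k^2/(16*t))) + 128 * (Real.exp (-(k^2/(16*t))) * (k^2/(16*t))) := by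
      field_simp
      ring
    rw [heq]
    linarith
  calc |(2*k + a)*P - (2*k - a)*Q| ≤ a * Q * (2 + 8*k^2/t) := hDbound
    _ ≤ a * (Real.exp (-(1-a)/t) * Real.exp (-(k^2/(16*t))) * Real.exp (-(k^2/(16*t)))) * (2 + 8*k^2/t) := by
        apply mul_le_mul_of_nonneg_right (mul_le_mul_of_nonneg_left hQsplit ha.le) (by positivity)
    _ = a * Real.exp (-(1-a)/t) * Real.exp (-(k^2/(16*t))) * ((2 + 8*k^2/t) * Real.exp (-(k^2/(16*t)))) := by ring
    _ ≤ a * Real.exp (-(1-a)/t) * Real.exp (-(k/16)) * 130 := by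
        apply mul_le_mul ?_ hbound2 (by positivity) (by positivity)
        apply mul_le_mul_of_nonneg_left hbound1 (by positivity)
    _ = 130 * Real.exp (-(1-a)/t) * Real.exp (-(k/16)) * a := by ring



set_option maxHeartbeats 1600000 in
theorem exit_density_small_time :
    ∃ t₀ > (0 : ℝ), ∃ C : ℝ, ∀ t x : ℝ, 0 < t → t < t₀ → 1/2 < x → x < 1 →
      |(∑' k : ℤ, ((1 - x) + 2 * (k : ℝ)) / (Real.sqrt (2 * π) * t ^ ((3 : ℝ)/2)) *
            Real.exp (-((1 - x) + 2 * (k : ℝ)) ^ 2 / (2 * t))) *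
          (Real.sqrt (2 * π) * t ^ ((3 : ℝ)/2) / (1 - x)) * Real.exp ((1 - x) ^ 2 / (2 * t)) - 1|
        ≤ C * Real.exp (-x / t) := by
  refine ⟨1, one_pos,
    65 * (∑' k : ℤ, (1 + 2*|(k:ℝ)|) * Real.exp (-((1/16) * |(k:ℝ)|))), ?_⟩
  intro t x ht ht1 hx hx1
  have hπ : (0:ℝ) < Real.sqrt (2*π) := Real.sqrt_pos.2 (by positivity)
  have htr : (0:ℝ) < t ^ ((3:ℝ)/2) := Real.rpow_pos_of_pos ht _
  set a := 1 - x with hadef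
  have ha : 0 < a := by rw [hadef]; linarith
  have ha2 : a ≤ 1/2 := by rw [hadef]; linarith
  have hax : -(1-a)/t = -x/t := by rw [hadef]; ring_nf
  set c0 := Real.sqrt (2*π) * t ^ ((3:ℝ)/2) with hc0def
  have hc0 : 0 < c0 := mul_pos hπ htr
  set g : ℤ → ℝ := fun k => (a + 2*(k:ℝ))/a * Real.exp ((a^2 - (a + 2*(k:ℝ))^2)/(2*t))
    with hgdef
  -- Step 1: rewrite the product as a single tsum
  have hFg : ∀ k : ℤ, ((a + 2*(k:ℝ)) / c0 * Real.exp (-((a + 2*(k:ℝ))^2) / (2*t)))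
      * (c0 / a) * Real.exp (a^2 / (2*t)) = g k := by
    intro k
    rw [hgdef]
    have he : Real.exp (-((a + 2*(k:ℝ))^2) / (2*t)) * Real.exp (a^2 / (2*t))
        = Real.exp ((a^2 - (a + 2*(k:ℝ))^2)/(2*t)) := by
      rw [← Real.exp_add]; congr 1; ring
    field_simp
    rw [← he]
    ring
  have hsum_eq : (∑' k : ℤ, (a + 2*(k:ℝ)) / c0 * Real.exp (-((a + 2*(k:ℝ))^2) / (2*t)))
      * (c0 / a) * Real.exp (a^2 / (2*t)) = ∑' k, g k := by
    rw [← tsum_mul_right, ← tsum_mul_right]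
    exact tsum_congr hFg
  -- summability of g
  have habs_k : ∀ k : ℤ, |(k:ℝ)| ≤ (k:ℝ)^2 := by
    intro k
    rcases eq_or_ne k 0 with h|h
    · simp [h]
    · have h1 : (1:ℝ) ≤ |(k:ℝ)| := by
        have := Int.one_le_abs h
        exact_mod_cast this
      nlinarith [sq_abs (k:ℝ)]
  have hmaj := exp_int_summable 1 one_pos
  have hg_sum : Summable g := by
    rw [← summable_abs_iff]
    apply Summable.of_nonneg_of_le (fun k => abs_nonneg _) ?_ (hmaj.mul_left (1/a))
    intro k
    rw [hgdef]
    simp only []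
    rw [abs_mul, abs_div, abs_of_pos ha, Real.abs_exp]
    have h1 : |a + 2*(k:ℝ)| ≤ 1 + 2*|(k:ℝ)| := by
      calc |a + 2*(k:ℝ)| ≤ |a| + |2*(k:ℝ)| := abs_add_le _ _
        _ ≤ 1 + 2*|(k:ℝ)| := by
            rw [abs_of_pos ha, abs_mul, abs_two]; linarith
    have h2 : Real.exp ((a^2 - (a + 2*(k:ℝ))^2)/(2*t)) ≤ Real.exp (-(1 * |(k:ℝ)|)) := by
      apply Real.exp_le_exp.2
      rw [div_le_iff₀ (by positivity : (0:ℝ) < 2*t)]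
      have h3 := habs_k k
      nlinarith [abs_nonneg (k:ℝ), neg_abs_le (k:ℝ), le_abs_self (k:ℝ),
        mul_le_mul_of_nonneg_right (neg_abs_le (k:ℝ)) ha.le,
        mul_le_mul_of_nonneg_left ht1.le (abs_nonneg (k:ℝ))]
    calc |a + 2*(k:ℝ)|/a * Real.exp ((a^2 - (a + 2*(k:ℝ))^2)/(2*t))
        ≤ (1 + 2*|(k:ℝ)|)/a * Real.exp (-(1 * |(k:ℝ)|)) := by
          apply mul_le_mul ?_ h2 (Real.exp_pos _).le (by positivity)
          gcongr
      _ = 1/a * ((1 + 2*|(k:ℝ)|) * Real.exp (-(1 * |(k:ℝ)|))) := by ring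
  have hg0 : g 0 = 1 := by
    rw [hgdef]
    norm_num [div_self ha.ne']
  set h : ℤ → ℝ := fun k => if k = 0 then 0 else g k with hhdef
  have hh_sum : Summable h := by
    refine (hg_sum.update 0 0).congr (fun k => ?_)
    rw [Function.update_apply, hhdef]
  have hh_sum' : Summable (fun k => h (-k)) :=
    ((Equiv.neg ℤ).summable_iff.2 hh_sum).congr (fun k => by simp [Function.comp])
  have hkey : ∑' k : ℤ, h (-k) = ∑' k, h k := by
    have := (Equiv.neg ℤ).tsum_eq h
    simpa using this
  have h2T : ∑' k : ℤ, (h k + h (-k)) = 2 * ∑' k, h k := by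
    rw [Summable.tsum_add hh_sum hh_sum', hkey]; ring
  have hs_abs : Summable (fun k : ℤ => |h k + h (-k)|) := (hh_sum.add hh_sum').abs
  -- pointwise pair bound
  have main : ∀ k : ℤ, 0 < k → |g k + g (-k)|
      ≤ (130 * Real.exp (-x/t)) * ((1 + 2*|(k:ℝ)|) * Real.exp (-((1/16) * |(k:ℝ)|))) := by
    intro k hk
    have hk1 : (1:ℝ) ≤ (k:ℝ) := by exact_mod_cast hk
    have hb := pair_bound t a (k:ℝ) ht ht1.le ha ha2 hk1
    rw [hax] at hb
    have hgg : g k + g (-k) = (a + 2*(k:ℝ))/a * Real.exp ((a^2 - (a + 2*(k:ℝ))^2)/(2*t)) +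
        (a + 2*(-(k:ℝ)))/a * Real.exp ((a^2 - (a + 2*(-(k:ℝ)))^2)/(2*t)) := by
      rw [hgdef]; push_cast; ring_nf
    rw [hgg]
    have habs : |(k:ℝ)| = (k:ℝ) := abs_of_pos (by linarith)
    rw [habs]
    calc |(a + 2*(k:ℝ))/a * Real.exp ((a^2 - (a + 2*(k:ℝ))^2)/(2*t)) +
        (a + 2*(-(k:ℝ)))/a * Real.exp ((a^2 - (a + 2*(-(k:ℝ)))^2)/(2*t))|
        ≤ 130 * Real.exp (-x/t) * Real.exp (-((k:ℝ)/16)) := hb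
      _ ≤ (130 * Real.exp (-x/t)) * ((1 + 2*(k:ℝ)) * Real.exp (-((1/16) * (k:ℝ)))) := by
          rw [show -((1/16) * (k:ℝ)) = -((k:ℝ)/16) by ring]
          apply mul_le_mul_of_nonneg_left ?_ (by positivity)
          apply le_mul_of_one_le_left (Real.exp_pos _).le (by linarith)
  have hptwise : ∀ k : ℤ, |h k + h (-k)|
      ≤ (130 * Real.exp (-x/t)) * ((1 + 2*|(k:ℝ)|) * Real.exp (-((1/16) * |(k:ℝ)|))) := by
    intro k
    rcases lt_trichotomy k 0 with hk|hk|hk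
    · have h1 : h k = g k := by rw [hhdef]; simp [hk.ne]
      have h2 : h (-k) = g (-k) := by rw [hhdef]; simp [hk.ne]
      rw [h1, h2, add_comm]
      have := main (-k) (by omega)
      rw [neg_neg] at this
      have habs2 : |((-k : ℤ):ℝ)| = |(k:ℝ)| := by push_cast; rw [abs_neg]
      rwa [habs2] at this
    · subst hk
      simp only [hhdef, neg_zero, if_pos rfl]
      norm_num
      positivity
    · have h1 : h k = g k := by rw [hhdef]; simp [hk.ne']
      have h2 : h (-k) = g (-k) := by rw [hhdef]; simp [hk.ne']
      rw [h1, h2]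
      exact main k hk
  -- assemble
  rw [hsum_eq]
  have hT : ∑' k, g k - 1 = ∑' k, h k := by
    rw [Summable.tsum_eq_add_tsum_ite hg_sum 0, hg0]
    simp only [hhdef]
    ring
  rw [hT]
  have hw_sum : Summable (fun k : ℤ =>
      (130 * Real.exp (-x/t)) * ((1 + 2*|(k:ℝ)|) * Real.exp (-((1/16) * |(k:ℝ)|)))) := by
    exact (exp_int_summable (1/16) (by norm_num)).mul_left _
  have hbig : ∑' k : ℤ, |h k + h (-k)|
      ≤ ∑' k : ℤ, (130 * Real.exp (-x/t)) * ((1 + 2*|(k:ℝ)|) * Real.exp (-((1/16) * |(k:ℝ)|))) :=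
    Summable.tsum_le_tsum hptwise hs_abs hw_sum
  have hwval : ∑' k : ℤ, (130 * Real.exp (-x/t)) * ((1 + 2*|(k:ℝ)|) * Real.exp (-((1/16) * |(k:ℝ)|)))
      = (130 * Real.exp (-x/t)) * ∑' k : ℤ, (1 + 2*|(k:ℝ)|) * Real.exp (-((1/16) * |(k:ℝ)|)) :=
    tsum_mul_left
  have habs_le : |∑' k : ℤ, (h k + h (-k))| ≤ ∑' k : ℤ, |h k + h (-k)| := by
    have := norm_tsum_le_tsum_norm (f := fun k : ℤ => h k + h (-k))
      (by simpa [Real.norm_eq_abs] using hs_abs)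
    simpa [Real.norm_eq_abs] using this
  rw [h2T, abs_mul, abs_two] at habs_le
  calc |∑' k, h k| = (2 * |∑' k, h k|) / 2 := by ring
    _ ≤ ((130 * Real.exp (-x/t)) * ∑' k : ℤ, (1 + 2*|(k:ℝ)|) * Real.exp (-((1/16) * |(k:ℝ)|))) / 2 := by
        rw [← hwval]
        linarith [le_trans habs_le hbig]
    _ = 65 * (∑' k : ℤ, (1 + 2*|(k:ℝ)|) * Real.exp (-((1/16) * |(k:ℝ)|))) * Real.exp (-x/t) := by
        ring
end
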